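/- arXiv:1903.10785 — 11 statements merged into one kernel-verified Lean document; each statement's English description precedes it below -/
import Mathlib

section
/- Let f : (0,∞) → (0,∞) be continuous with f(1) = 1. If f is geometrically convex, i.e. f(√(x·y)) ≤ √(f(x)·f(y)) for all x, y > 0, then f is power monotone increasing: f(t)^r ≤ f(t^r) for all t > 0 and all real r ≥ 1. -/
/-!
In logarithmic coordinates `g u = log (f (exp u))`, geometric convexity of `f` says exactly that
`g` is midpoint convex, and `f 1 = 1` says `g 0 = 0`. A continuous midpoint convex function is
convex (it satisfies the convexity inequality at dyadic weights by induction, hence at all weights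
by density), and a convex function vanishing at `0` satisfies `r * g u ≤ g (r * u)` for `r ≥ 1`.
Exponentiating at `u = log t` gives `f t ^ r ≤ f (t ^ r)`.
-/

open Real Set Filter Topology

section MidpointConvex

variable {g : ℝ → ℝ}

theorem midpointConvex_apply_dyadic_le
    (hmid : ∀ x y, g ((x + y) / 2) ≤ (g x + g y) / 2) (x y : ℝ) (n : ℕ) :
    ∀ k : ℕ, k ≤ 2 ^ n →
      g (y + (k / 2 ^ n) * (x - y)) ≤ g y + (k / 2 ^ n) * (g x - g y) := by
  induction n with
  | zero =>
    intro k hk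
    interval_cases k <;> simp
  | succ n ih =>
    intro k hk
    have hi : k / 2 ≤ 2 ^ n := by rw [pow_succ] at hk; omega
    have hj : k - k / 2 ≤ 2 ^ n := by rw [pow_succ] at hk; omega
    have hk_split : (k : ℝ) = (k / 2 : ℕ) + (k - k / 2 : ℕ) := by
      rw [← Nat.cast_add, Nat.add_sub_cancel' (Nat.div_le_self k 2)]
    calc g (y + (k / 2 ^ (n + 1)) * (x - y))
        = g (((y + ((k / 2 : ℕ) / 2 ^ n) * (x - y)) +
            (y + ((k - k / 2 : ℕ) / 2 ^ n) * (x - y))) / 2) := by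
          congr 1; rw [hk_split, pow_succ]; ring
      _ ≤ (g (y + ((k / 2 : ℕ) / 2 ^ n) * (x - y)) +
            g (y + ((k - k / 2 : ℕ) / 2 ^ n) * (x - y))) / 2 := hmid _ _
      _ ≤ ((g y + ((k / 2 : ℕ) / 2 ^ n) * (g x - g y)) +
            (g y + ((k - k / 2 : ℕ) / 2 ^ n) * (g x - g y))) / 2 := by
          linarith [ih _ hi, ih _ hj]
      _ = g y + (k / 2 ^ (n + 1)) * (g x - g y) := by
          rw [hk_split, pow_succ]; ring

theorem convexOn_univ_of_continuous_of_midpoint (hg : Continuous g)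
    (hmid : ∀ x y, g ((x + y) / 2) ≤ (g x + g y) / 2) : ConvexOn ℝ univ g := by
  refine ⟨convex_univ, fun x _ y _ a b ha hb hab => ?_⟩
  obtain rfl : b = 1 - a := by linarith
  have hclosed : IsClosed {s : ℝ | g (y + s * (x - y)) ≤ g y + s * (g x - g y)} :=
    isClosed_le (hg.comp (by fun_prop)) (by fun_prop)
  have hdyadic : Tendsto (fun n : ℕ => (⌊a * 2 ^ n⌋₊ : ℝ) / 2 ^ n) atTop (𝓝 a) :=
    (tendsto_nat_floor_mul_div_atTop ha).comp
      (tendsto_pow_atTop_atTop_of_one_lt one_lt_two)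
  have hfloor_le (n : ℕ) : ⌊a * 2 ^ n⌋₊ ≤ 2 ^ n :=
    Nat.floor_le_of_le (by push_cast; nlinarith [pow_pos (two_pos : (0 : ℝ) < 2) n])
  have hmem : g (y + a * (x - y)) ≤ g y + a * (g x - g y) :=
    hclosed.mem_of_tendsto hdyadic <| Eventually.of_forall fun n =>
      midpointConvex_apply_dyadic_le hmid x y n _ (hfloor_le n)
  simp only [smul_eq_mul]
  rw [show a * x + (1 - a) * y = y + a * (x - y) by ring]
  linarith

end MidpointConvex

theorem ConvexOn.mul_le_apply_smul {E : Type*} [AddCommGroup E] [Module ℝ E] {g : E → ℝ}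
    (hg : ConvexOn ℝ univ g) (h0 : g 0 ≤ 0) {r : ℝ} (hr : 1 ≤ r) (u : E) :
    r * g u ≤ g (r • u) := by
  have hr0 : 0 < r := one_pos.trans_le hr
  have hconv := hg.2 (mem_univ (r • u)) (mem_univ 0) (inv_nonneg.2 hr0.le)
    (sub_nonneg.2 (inv_le_one_of_one_le₀ hr)) (add_sub_cancel _ _)
  rw [smul_zero, add_zero, smul_smul, inv_mul_cancel₀ hr0.ne', one_smul, smul_eq_mul,
    smul_eq_mul] at hconv
  have : g u ≤ r⁻¹ * g (r • u) :=
    hconv.trans (by nlinarith [sub_nonneg.2 (inv_le_one_of_one_le₀ hr)])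
  rwa [le_inv_mul_iff₀ hr0] at this

theorem log_comp_exp_midpoint_le_of_geomConvex {f : ℝ → ℝ} (hpos : ∀ t : ℝ, 0 < t → 0 < f t)
    (hgcv : ∀ x y : ℝ, 0 < x → 0 < y → f (√(x * y)) ≤ √(f x * f y)) (u v : ℝ) :
    log (f (exp ((u + v) / 2))) ≤ (log (f (exp u)) + log (f (exp v))) / 2 := by
  have hfu := hpos _ (exp_pos u)
  have hfv := hpos _ (exp_pos v)
  have h := hgcv _ _ (exp_pos u) (exp_pos v)
  rw [← exp_add, ← exp_half] at h
  calc log (f (exp ((u + v) / 2))) ≤ log (√(f (exp u) * f (exp v))) :=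
        log_le_log (hpos _ (exp_pos _)) h
    _ = (log (f (exp u)) + log (f (exp v))) / 2 := by
        rw [log_sqrt (by positivity), log_mul hfu.ne' hfv.ne']

/-- A positive continuous function on `(0,∞)` with `f 1 = 1` which is geometrically
convex is power monotone increasing. -/
theorem gcv_implies_pmi (f : ℝ → ℝ)
    (hpos : ∀ t : ℝ, 0 < t → 0 < f t)
    (hcont : ContinuousOn f (Set.Ioi (0 : ℝ)))
    (hone : f 1 = 1)
    (hgcv : ∀ x y : ℝ, 0 < x → 0 < y →
      f (Real.sqrt (x * y)) ≤ Real.sqrt (f x * f y)) :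
    ∀ t : ℝ, 0 < t → ∀ r : ℝ, 1 ≤ r → f t ^ r ≤ f (t ^ r) := by
  intro t ht r hr
  set g : ℝ → ℝ := fun u => log (f (exp u))
  have hg_cont : Continuous g :=
    (hcont.comp_continuous continuous_exp fun u => exp_pos u).log
      fun u => (hpos _ (exp_pos u)).ne'
  have hg_convex : ConvexOn ℝ univ g :=
    convexOn_univ_of_continuous_of_midpoint hg_cont
      (log_comp_exp_midpoint_le_of_geomConvex hpos hgcv)
  have hg_zero : g 0 = 0 := by simp [g, hone]
  have key : r * g (log t) ≤ g (r * log t) := hg_convex.mul_le_apply_smul hg_zero.le hr _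
  calc f t ^ r = exp (r * g (log t)) := by
        simp only [g, exp_log ht, rpow_def_of_pos (hpos t ht), mul_comm]
    _ ≤ exp (g (r * log t)) := exp_le_exp.2 key
    _ = f (t ^ r) := by
        simp only [g, ← rpow_def_of_pos ht, mul_comm r, exp_log (hpos _ (rpow_pos_of_pos ht r))]
end

section
/- Let f : (0,∞) → (0,∞) be continuous with f(1) = 1. If f is geometrically concave, i.e. f(√(x·y)) ≥ √(f(x)·f(y)) for all x, y > 0, then f is power monotone decreasing: f(t)^r ≥ f(t^r) for all t > 0 and all real r ≥ 1. -/
/-!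
Put `g u = log (f (exp u))`. Geometric concavity of `f` is midpoint concavity of `g`, and a
continuous midpoint concave function is concave. Since `g 0 = 0`, concavity gives
`g (r * u) ≤ r * g u` for `r ≥ 1`, which at `u = log t` is `f (t ^ r) ≤ f t ^ r`.
-/

open Set Real

theorem nonneg_of_midpoint_concave_on_unitInterval {φ : ℝ → ℝ} (hφ : ContinuousOn φ (Icc 0 1))
    (hmid : ∀ a ∈ Icc (0 : ℝ) 1, ∀ b ∈ Icc (0 : ℝ) 1, (φ a + φ b) / 2 ≤ φ ((a + b) / 2))
    (h₀ : 0 ≤ φ 0) (h₁ : 0 ≤ φ 1) {t : ℝ} (ht : t ∈ Icc (0 : ℝ) 1) : 0 ≤ φ t := by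
  obtain ⟨t₀, ht₀, hmin⟩ := isCompact_Icc.exists_isMinOn (nonempty_Icc.2 zero_le_one) hφ
  rw [isMinOn_iff] at hmin
  by_contra! hneg
  have hm : φ t₀ < 0 := (hmin t ht).trans_lt hneg
  -- The leftmost minimiser `t₁` is interior, and it is the midpoint of `t₁ ± h` where `φ` is
  -- larger on the left and not smaller on the right.
  have hS : IsCompact (Icc 0 1 ∩ φ ⁻¹' {φ t₀}) :=
    isCompact_Icc.of_isClosed_subset
      (hφ.preimage_isClosed_of_isClosed isClosed_Icc isClosed_singleton) inter_subset_left
  obtain ⟨t₁, ⟨ht₁, hφt₁⟩, hleast⟩ := hS.exists_isLeast ⟨t₀, ht₀, rfl⟩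
  replace hφt₁ : φ t₁ = φ t₀ := hφt₁
  have ht₁pos : 0 < t₁ := ht₁.1.lt_of_ne (by rintro rfl; linarith)
  have ht₁lt : t₁ < 1 := ht₁.2.lt_of_ne (by rintro rfl; linarith)
  set h := min t₁ (1 - t₁)
  have hh : 0 < h := lt_min ht₁pos (by linarith)
  have hleft : t₁ - h ∈ Icc (0 : ℝ) 1 := ⟨by linarith [min_le_left t₁ (1 - t₁)], by linarith⟩
  have hright : t₁ + h ∈ Icc (0 : ℝ) 1 := ⟨by linarith, by linarith [min_le_right t₁ (1 - t₁)]⟩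
  have hlt : φ t₀ < φ (t₁ - h) :=
    (hmin _ hleft).lt_of_ne fun heq => by linarith [hleast ⟨hleft, heq.symm⟩]
  have hmid₁ := hmid _ hleft _ hright
  rw [show (t₁ - h + (t₁ + h)) / 2 = t₁ by ring, hφt₁] at hmid₁
  linarith [hmin _ hright]

theorem concaveOn_univ_of_midpoint {g : ℝ → ℝ} (hg : Continuous g)
    (hmid : ∀ a b, (g a + g b) / 2 ≤ g ((a + b) / 2)) : ConcaveOn ℝ univ g := by
  refine ⟨convex_univ, fun x _ y _ a b ha hb hab => ?_⟩
  set φ : ℝ → ℝ := fun t => g (y + t * (x - y)) - (g y + t * (g x - g y))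
  have hφ : Continuous φ := by fun_prop
  have hφmid : ∀ s ∈ Icc (0 : ℝ) 1, ∀ t ∈ Icc (0 : ℝ) 1, (φ s + φ t) / 2 ≤ φ ((s + t) / 2) := by
    intro s _ t _
    have := hmid (y + s * (x - y)) (y + t * (x - y))
    simp only [φ]
    rw [show y + (s + t) / 2 * (x - y) = (y + s * (x - y) + (y + t * (x - y))) / 2 by ring]
    linarith
  obtain rfl : b = 1 - a := by linarith
  have := nonneg_of_midpoint_concave_on_unitInterval hφ.continuousOn hφmid (by simp [φ])
    (by simp [φ]) ⟨ha, by linarith⟩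
  simp only [φ, smul_eq_mul] at this ⊢
  rw [show a * x + (1 - a) * y = y + a * (x - y) by ring]
  linarith

theorem ConcaveOn.map_mul_le {g : ℝ → ℝ} (hg : ConcaveOn ℝ univ g) (h₀ : 0 ≤ g 0) {r : ℝ}
    (hr : 1 ≤ r) (u : ℝ) : g (r * u) ≤ r * g u := by
  have hr₀ : 0 < r := one_pos.trans_le hr
  have hs : 0 ≤ 1 - r⁻¹ := sub_nonneg.2 (inv_le_one_of_one_le₀ hr)
  have hconc := hg.2 (mem_univ (r * u)) (mem_univ 0) (inv_nonneg.2 hr₀.le) hs (add_sub_cancel _ _)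
  simp only [smul_eq_mul, mul_zero, add_zero, inv_mul_cancel_left₀ hr₀.ne'] at hconc
  have h₁ : r⁻¹ * g (r * u) ≤ g u := by linarith [mul_nonneg hs h₀]
  calc g (r * u) = r * (r⁻¹ * g (r * u)) := by field_simp
    _ ≤ r * g u := by gcongr

theorem midpoint_concave_log_comp_exp {f : ℝ → ℝ} (hpos : ∀ t : ℝ, 0 < t → 0 < f t)
    (hgcc : ∀ x y : ℝ, 0 < x → 0 < y → √(f x * f y) ≤ f √(x * y)) (a b : ℝ) :
    (log (f (exp a)) + log (f (exp b))) / 2 ≤ log (f (exp ((a + b) / 2))) := by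
  have hsqrt : √(exp a * exp b) = exp ((a + b) / 2) := by
    rw [← exp_add, sqrt_eq_iff_mul_self_eq_of_pos (exp_pos _), ← exp_add]
    ring_nf
  have ha := hpos _ (exp_pos a)
  have hb := hpos _ (exp_pos b)
  calc (log (f (exp a)) + log (f (exp b))) / 2 = log √(f (exp a) * f (exp b)) := by
        rw [log_sqrt (by positivity), log_mul ha.ne' hb.ne']
    _ ≤ log (f (exp ((a + b) / 2))) := by
        rw [← hsqrt]
        exact log_le_log (by positivity) (hgcc _ _ (exp_pos a) (exp_pos b))

/-- A positive continuous function on `(0,∞)` with `f 1 = 1` which is geometrically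
concave is power monotone decreasing. -/
theorem gcc_implies_pmd (f : ℝ → ℝ)
    (hpos : ∀ t : ℝ, 0 < t → 0 < f t)
    (hcont : ContinuousOn f (Set.Ioi (0 : ℝ)))
    (hone : f 1 = 1)
    (hgcc : ∀ x y : ℝ, 0 < x → 0 < y →
      Real.sqrt (f x * f y) ≤ f (Real.sqrt (x * y))) :
    ∀ t : ℝ, 0 < t → ∀ r : ℝ, 1 ≤ r → f (t ^ r) ≤ f t ^ r := by
  intro t ht r hr
  have hcont' : Continuous fun u => log (f (exp u)) :=
    (hcont.comp_continuous continuous_exp exp_pos).log fun u => (hpos _ (exp_pos u)).ne'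
  have hconc := concaveOn_univ_of_midpoint hcont' (midpoint_concave_log_comp_exp hpos hgcc)
  have key := hconc.map_mul_le (by simp [hone]) hr (log t)
  rw [exp_log ht, mul_comm, ← rpow_def_of_pos ht, ← log_rpow (hpos t ht)] at key
  exact (log_le_log_iff (hpos _ (rpow_pos_of_pos ht r)) (rpow_pos_of_pos (hpos t ht) r)).1 key
end

section
/- The functions t ↦ 2t/(t+1) and t ↦ t² are geometrically concave on (0,∞), but their sum t ↦ 2t/(t+1) + t² is not geometrically concave: there exist x, y > 0 such that, writing s(t) = 2t/(t+1) + t², one has s(√(x·y)) < √(s(x)·s(y)). -/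
/-!
Geometric concavity of `2t/(t+1)` reduces to `(√(xy) + 1)² ≤ (x + 1)(y + 1)`, which is AM–GM
`2√(xy) ≤ x + y`; for `t²` it holds with equality. The sum fails at the pair `x = 1/4`, `y = 4`
with `√(xy) = 1`: the sum is `2` there, while the product of its values at `1/4` and `4`
is `407/50 > 4`.
-/

open Real

lemma two_mul_sqrt_mul_le_add {x y : ℝ} (hx : 0 ≤ x) (hy : 0 ≤ y) :
    2 * √(x * y) ≤ x + y := by
  rw [sqrt_mul hx]
  nlinarith [sq_nonneg (√x - √y), sq_sqrt hx, sq_sqrt hy]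

lemma sq_sqrt_mul_add_one_le {x y : ℝ} (hx : 0 ≤ x) (hy : 0 ≤ y) :
    (√(x * y) + 1) ^ 2 ≤ (x + 1) * (y + 1) := by
  nlinarith [two_mul_sqrt_mul_le_add hx hy, sq_sqrt (mul_nonneg hx hy)]

lemma sqrt_mul_two_mul_div_add_one_le {x y : ℝ} (hx : 0 ≤ x) (hy : 0 ≤ y) :
    √((2 * x / (x + 1)) * (2 * y / (y + 1))) ≤ 2 * √(x * y) / (√(x * y) + 1) := by
  set g := √(x * y)
  have hg : g ^ 2 = x * y := sq_sqrt (mul_nonneg hx hy)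
  have hprod : (2 * x / (x + 1)) * (2 * y / (y + 1)) = (2 * g) ^ 2 / ((x + 1) * (y + 1)) := by
    rw [mul_pow, hg]
    field_simp
  rw [sqrt_le_left (by positivity), hprod, div_pow]
  exact div_le_div_of_nonneg_left (by positivity) (by positivity)
    (sq_sqrt_mul_add_one_le hx hy)

lemma sqrt_sq_mul_sq_eq_sqrt_mul_sq {x y : ℝ} (hx : 0 ≤ x) (hy : 0 ≤ y) :
    √(x ^ 2 * y ^ 2) = √(x * y) ^ 2 := by
  rw [← mul_pow, sqrt_sq (mul_nonneg hx hy), sq_sqrt (mul_nonneg hx hy)]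

/-- The functions `2t/(t+1)` and `t²` are geometrically concave on `(0,∞)`, but their
sum is not geometrically concave. -/
theorem sum_of_geomConcave_not_geomConcave :
    (∀ x y : ℝ, 0 < x → 0 < y →
      Real.sqrt ((2 * x / (x + 1)) * (2 * y / (y + 1))) ≤
        2 * Real.sqrt (x * y) / (Real.sqrt (x * y) + 1)) ∧
    (∀ x y : ℝ, 0 < x → 0 < y →
      Real.sqrt (x ^ 2 * y ^ 2) ≤ Real.sqrt (x * y) ^ 2) ∧
    (∃ x y : ℝ, 0 < x ∧ 0 < y ∧
      (2 * Real.sqrt (x * y) / (Real.sqrt (x * y) + 1) + Real.sqrt (x * y) ^ 2) <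
        Real.sqrt ((2 * x / (x + 1) + x ^ 2) * (2 * y / (y + 1) + y ^ 2))) := by
  refine ⟨fun x y hx hy => sqrt_mul_two_mul_div_add_one_le hx.le hy.le,
    fun x y hx hy => (sqrt_sq_mul_sq_eq_sqrt_mul_sq hx.le hy.le).le,
    1 / 4, 4, by norm_num, by norm_num, ?_⟩
  have hmean : √((1 : ℝ) / 4 * 4) = 1 := by norm_num
  rw [hmean, lt_sqrt (by norm_num)]
  norm_num
end

section
/- Let Γ = {(a,b) ∈ ℝ² : 0 < a−b ≤ 1, −1 ≤ a ≤ 2, −2 ≤ b ≤ 1} ∪ (([0,1]×[−1,0]) \ {(0,0)}) ∪ {(a,a) : a ≠ 0}, and for (a,b) ∈ Γ define u_{a,b} : (0,∞) → (0,∞) by u_{a,b}(t) = g_a(t)/g_b(t) for t ≠ 1 and u_{a,b}(1) = 1, where g_c(t) = (t^c − 1)/c for c ≠ 0 and g_0(t) = log t. Then u_{a,b} is geometrically convex if and only if |a| ≥ |b|. -/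
/-- The parameter region `Γ`. -/
def GammaRegion : Set (ℝ × ℝ) :=
  {p | (0 < p.1 - p.2 ∧ p.1 - p.2 ≤ 1 ∧ -1 ≤ p.1 ∧ p.1 ≤ 2 ∧ -2 ≤ p.2 ∧ p.2 ≤ 1)} ∪
  ((Set.Icc (0 : ℝ) 1 ×ˢ Set.Icc (-1 : ℝ) 0) \ {(0, 0)}) ∪
  {p | p.1 = p.2 ∧ p.1 ≠ 0}

/-- `g_c(t) = (t^c - 1)/c` for `c ≠ 0`, and `g_0(t) = log t`. -/
noncomputable def gAux (c t : ℝ) : ℝ :=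
  if c = 0 then Real.log t else (t ^ c - 1) / c

/-- The function `u_{a,b}(t) = g_a(t)/g_b(t)`, extended by `u_{a,b}(1) = 1`. -/
noncomputable def uab (a b t : ℝ) : ℝ :=
  if t = 1 then 1 else gAux a t / gAux b t

/-!
Substituting `t = exp s` gives `u_{a,b}(exp s) = F(a s) / F(b s)` with `F x = (exp x - 1) / x`
(`F = dslope exp 0`, which is analytic), so geometric convexity of `u_{a,b}` is midpoint convexity
of `φ s = log F(a s) - log F(b s)`. One computes `x² (log F)''(x) = 1 - 1 / (F x F(-x))`, and
`F x F(-x) = (sinh (x/2) / (x/2))²` increases strictly with `|x|` because `sinh` is convex on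
`[0, ∞)`. Hence `φ'' ≥ 0` when `|b| ≤ |a|`; conversely, midpoint convexity at `s = ±1` gives
`F b F(-b) ≤ F a F(-a)`, i.e. `|b| ≤ |a|`.
-/

open Real Set Filter Topology
open scoped ContDiff

theorem AnalyticOnNhd.dslope {𝕜 E : Type*} [NontriviallyNormedField 𝕜] [NormedAddCommGroup E]
    [NormedSpace 𝕜 E] {f : 𝕜 → E} {s : Set 𝕜} {a : 𝕜} (hf : AnalyticOnNhd 𝕜 f s) (ha : a ∈ s) :
    AnalyticOnNhd 𝕜 (dslope f a) s := by
  intro b hb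
  rcases eq_or_ne b a with rfl | hba
  · obtain ⟨p, hp⟩ := hf b hb
    exact hp.has_fpower_series_dslope_fslope.analyticAt
  · refine AnalyticAt.congr ?_ (dslope_eventuallyEq_slope_of_ne f hba).symm
    simp only [slope_fun_def]
    exact ((analyticAt_id.sub analyticAt_const).inv (sub_ne_zero.2 hba)).smul
      ((hf b hb).sub analyticAt_const)

noncomputable def expSlope : ℝ → ℝ := dslope exp 0

lemma expSlope_zero : expSlope 0 = 1 := by
  simp [expSlope, dslope_same]

lemma expSlope_of_ne_zero {x : ℝ} (hx : x ≠ 0) : expSlope x = (exp x - 1) / x := by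
  simp [expSlope, dslope_of_ne _ hx, slope_def_field]

lemma contDiff_expSlope {n : WithTop ℕ∞} : ContDiff ℝ n expSlope :=
  (analyticOnNhd_rexp.dslope (mem_univ 0)).contDiff

lemma expSlope_pos (x : ℝ) : 0 < expSlope x := by
  rcases eq_or_ne x 0 with rfl | hx
  · simp [expSlope_zero]
  · rw [expSlope_of_ne_zero hx]
    rcases hx.lt_or_gt with hx | hx
    · exact div_pos_of_neg_of_neg (by linarith [exp_lt_one_iff.2 hx]) hx
    · exact div_pos (by linarith [one_lt_exp_iff.2 hx]) hx

lemma dslope_sinh_zero : dslope sinh 0 0 = 1 := by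
  simp [dslope_same]

lemma dslope_sinh_of_ne_zero {x : ℝ} (hx : x ≠ 0) : dslope sinh 0 x = sinh x / x := by
  simp [dslope_of_ne _ hx, slope_def_field]

lemma strictConvexOn_sinh_Ici : StrictConvexOn ℝ (Ici 0) sinh := by
  refine strictConvexOn_of_deriv2_pos (convex_Ici 0) continuous_sinh.continuousOn fun x hx => ?_
  rw [interior_Ici] at hx
  simpa [Real.deriv_sinh, Real.deriv_cosh] using sinh_pos_iff.2 hx

lemma strictMonoOn_dslope_sinh : StrictMonoOn (dslope sinh 0) (Ici 0) := by
  intro y hy x hx hyx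
  have hx0 : x ≠ 0 := (lt_of_le_of_lt hy hyx).ne'
  rcases (mem_Ici.1 hy).eq_or_lt with rfl | hy0
  · rw [dslope_sinh_zero, dslope_sinh_of_ne_zero hx0, one_lt_div (by linarith)]
    exact self_lt_sinh_iff.2 (lt_of_le_of_lt hy hyx)
  · simpa [dslope_sinh_of_ne_zero hx0, dslope_sinh_of_ne_zero hy0.ne'] using
      strictConvexOn_sinh_Ici.secant_strict_mono self_mem_Ici hy hx hy0.ne' hx0 hyx

lemma dslope_sinh_neg (x : ℝ) : dslope sinh 0 (-x) = dslope sinh 0 x := by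
  rcases eq_or_ne x 0 with rfl | hx
  · simp
  · rw [dslope_sinh_of_ne_zero hx, dslope_sinh_of_ne_zero (neg_ne_zero.2 hx), sinh_neg,
      neg_div_neg_eq]

lemma expSlope_mul_expSlope_neg (x : ℝ) :
    expSlope x * expSlope (-x) = dslope sinh 0 (|x| / 2) ^ 2 := by
  have habs : dslope sinh 0 (|x| / 2) = dslope sinh 0 (x / 2) := by
    rcases abs_choice x with h | h <;> simp [h, neg_div, dslope_sinh_neg]
  rw [habs]
  rcases eq_or_ne x 0 with rfl | hx
  · simp [expSlope_zero]
  have hx2 : x / 2 ≠ 0 := by positivity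
  rw [expSlope_of_ne_zero hx, expSlope_of_ne_zero (neg_ne_zero.2 hx), dslope_sinh_of_ne_zero hx2,
    sinh_eq]
  have he : exp x = exp (x / 2) ^ 2 := by rw [← exp_nat_mul]; ring_nf
  rw [he, exp_neg, exp_neg, he]
  have := exp_pos (x / 2)
  field_simp
  ring

lemma expSlope_mul_expSlope_neg_lt_iff {x y : ℝ} :
    expSlope y * expSlope (-y) < expSlope x * expSlope (-x) ↔ |y| < |x| := by
  have hmono : StrictMonoOn (fun t : ℝ => dslope sinh 0 (t / 2) ^ 2) (Ici 0) := by
    intro s hs t ht hst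
    have hs2 : s / 2 ∈ Ici (0 : ℝ) := mem_Ici.2 (by linarith [mem_Ici.1 hs])
    have ht2 : t / 2 ∈ Ici (0 : ℝ) := mem_Ici.2 (by linarith [mem_Ici.1 ht])
    have hone : 1 ≤ dslope sinh 0 (s / 2) :=
      dslope_sinh_zero ▸ strictMonoOn_dslope_sinh.monotoneOn self_mem_Ici hs2 (mem_Ici.1 hs2)
    exact pow_lt_pow_left₀ (strictMonoOn_dslope_sinh hs2 ht2 (by linarith)) (by linarith)
      two_ne_zero
  simp only [expSlope_mul_expSlope_neg]
  exact hmono.lt_iff_lt (abs_nonneg y) (abs_nonneg x)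

lemma expSlope_mul_expSlope_neg_le_of_abs_le {x y : ℝ} (h : |y| ≤ |x|) :
    expSlope y * expSlope (-y) ≤ expSlope x * expSlope (-x) := by
  rcases h.eq_or_lt with h | h
  · exact le_of_eq (by simp only [expSlope_mul_expSlope_neg, h])
  · exact (expSlope_mul_expSlope_neg_lt_iff.2 h).le

noncomputable def logExpSlope (x : ℝ) : ℝ := log (expSlope x)

lemma contDiff_logExpSlope {n : WithTop ℕ∞} : ContDiff ℝ n logExpSlope :=
  contDiff_expSlope.log fun x => (expSlope_pos x).ne'

lemma hasDerivAt_logExpSlope {x : ℝ} (hx : x ≠ 0) :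
    HasDerivAt logExpSlope (exp x / (exp x - 1) - x⁻¹) x := by
  have hx1 : exp x - 1 ≠ 0 := sub_ne_zero.2 ((exp_eq_one_iff x).not.2 hx)
  have heq : (fun y => log (exp y - 1) - log y) =ᶠ[𝓝 x] logExpSlope := by
    filter_upwards [eventually_ne_nhds hx] with y hy
    rw [logExpSlope, expSlope_of_ne_zero hy,
      log_div (sub_ne_zero.2 ((exp_eq_one_iff y).not.2 hy)) hy]
  refine HasDerivAt.congr_of_eventuallyEq ?_ heq.symm
  exact (((hasDerivAt_exp x).sub_const 1).log hx1).sub (hasDerivAt_log hx)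

lemma sq_mul_iteratedDeriv_two_logExpSlope (x : ℝ) :
    x ^ 2 * iteratedDeriv 2 logExpSlope x = 1 - (expSlope x * expSlope (-x))⁻¹ := by
  rcases eq_or_ne x 0 with rfl | hx
  · simp [expSlope_zero]
  have hx1 : exp x - 1 ≠ 0 := sub_ne_zero.2 ((exp_eq_one_iff x).not.2 hx)
  have hderiv : deriv logExpSlope =ᶠ[𝓝 x] fun y => exp y / (exp y - 1) - y⁻¹ := by
    filter_upwards [eventually_ne_nhds hx] with y hy using (hasDerivAt_logExpSlope hy).deriv
  have h2 : HasDerivAt (fun y => exp y / (exp y - 1) - y⁻¹)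
      ((exp x * (exp x - 1) - exp x * exp x) / (exp x - 1) ^ 2 - -(x ^ 2)⁻¹) x :=
    ((hasDerivAt_exp x).fun_div ((hasDerivAt_exp x).sub_const 1) hx1).sub
      (hasDerivAt_inv hx)
  rw [iteratedDeriv_succ, iteratedDeriv_one, hderiv.deriv_eq, h2.deriv,
    expSlope_of_ne_zero hx, expSlope_of_ne_zero (neg_ne_zero.2 hx), exp_neg]
  have := exp_pos x
  have : 1 - exp x ≠ 0 := fun h => hx1 (by linarith)
  field_simp
  ring

lemma sq_mul_iteratedDeriv_two_logExpSlope_le {x y : ℝ} (h : |y| ≤ |x|) :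
    y ^ 2 * iteratedDeriv 2 logExpSlope y ≤ x ^ 2 * iteratedDeriv 2 logExpSlope x := by
  rw [sq_mul_iteratedDeriv_two_logExpSlope, sq_mul_iteratedDeriv_two_logExpSlope]
  exact sub_le_sub_left (inv_anti₀ (mul_pos (expSlope_pos y) (expSlope_pos _))
    (expSlope_mul_expSlope_neg_le_of_abs_le h)) 1

lemma iteratedDeriv_two_logExpSlope_nonneg (x : ℝ) : 0 ≤ iteratedDeriv 2 logExpSlope x := by
  have hoff : {0}ᶜ ⊆ {x : ℝ | 0 ≤ iteratedDeriv 2 logExpSlope x} := fun x hx => by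
    have h := sq_mul_iteratedDeriv_two_logExpSlope_le (x := x) (y := 0) (by simp)
    rw [zero_pow two_ne_zero, zero_mul] at h
    exact nonneg_of_mul_nonneg_right h (pow_pos (abs_pos.2 hx) 2 |>.trans_eq (sq_abs x))
  have hclosed : IsClosed {x : ℝ | 0 ≤ iteratedDeriv 2 logExpSlope x} :=
    isClosed_le continuous_const (contDiff_logExpSlope.continuous_iteratedDeriv')
  exact closure_minimal hoff hclosed (by simp)

lemma convexOn_logExpSlope_mul_sub {a b : ℝ} (hab : |b| ≤ |a|) :
    ConvexOn ℝ univ fun s => logExpSlope (a * s) - logExpSlope (b * s) := by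
  have hcomp (c : ℝ) {n : WithTop ℕ∞} : ContDiff ℝ n fun s => logExpSlope (c * s) :=
    contDiff_logExpSlope.comp (contDiff_const.mul contDiff_id)
  have hφ : ContDiff ℝ 2 fun s => logExpSlope (a * s) - logExpSlope (b * s) :=
    (hcomp a).sub (hcomp b)
  refine convexOn_univ_of_deriv2_nonneg (hφ.differentiable (by simp))
    (by simpa using hφ.differentiable_iteratedDeriv 1 (by simp)) fun s => ?_
  rw [← iteratedDeriv_eq_iterate, ← Pi.sub_def,
    iteratedDeriv_sub (hcomp a).contDiffAt (hcomp b).contDiffAt,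
    iteratedDeriv_comp_const_mul contDiff_logExpSlope,
    iteratedDeriv_comp_const_mul contDiff_logExpSlope]
  rcases eq_or_ne s 0 with rfl | hs
  · simpa [← sub_mul] using mul_nonneg (sub_nonneg.2 (sq_le_sq.2 hab))
      (iteratedDeriv_two_logExpSlope_nonneg 0)
  · have hle := sq_mul_iteratedDeriv_two_logExpSlope_le (x := a * s) (y := b * s)
      (by rw [abs_mul, abs_mul]; exact mul_le_mul_of_nonneg_right hab (abs_nonneg s))
    rw [mul_pow, mul_pow] at hle
    have hs2 : 0 < s ^ 2 := by positivity
    nlinarith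

lemma geomConvex_iff_midpointConvex {u φ : ℝ → ℝ} (hu : ∀ s, u (exp s) = exp (φ s)) :
    (∀ x y : ℝ, 0 < x → 0 < y → u (√(x * y)) ≤ √(u x * u y)) ↔
      ∀ s r : ℝ, φ ((s + r) / 2) ≤ (φ s + φ r) / 2 := by
  have key (s r : ℝ) :
      u (√(exp s * exp r)) ≤ √(u (exp s) * u (exp r)) ↔ φ ((s + r) / 2) ≤ (φ s + φ r) / 2 := by
    rw [← exp_add, ← exp_half, hu, hu, hu, ← exp_add, ← exp_half, exp_le_exp]
  refine ⟨fun h s r => (key s r).1 (h _ _ (exp_pos s) (exp_pos r)), fun h x y hx hy => ?_⟩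
  simpa only [exp_log hx, exp_log hy] using (key (log x) (log y)).2 (h _ _)

lemma gAux_exp (c s : ℝ) : gAux c (exp s) = s * expSlope (c * s) := by
  rcases eq_or_ne c 0 with rfl | hc
  · simp [gAux, expSlope_zero]
  rcases eq_or_ne s 0 with rfl | hs
  · simp [gAux, hc]
  rw [gAux, if_neg hc, ← exp_mul, expSlope_of_ne_zero (mul_ne_zero hc hs)]
  field_simp

lemma uab_exp (a b s : ℝ) :
    uab a b (exp s) = exp (logExpSlope (a * s) - logExpSlope (b * s)) := by
  rw [exp_sub, logExpSlope, logExpSlope, exp_log (expSlope_pos _), exp_log (expSlope_pos _)]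
  rcases eq_or_ne s 0 with rfl | hs
  · simp [uab, expSlope_zero]
  rw [uab, if_neg (exp_eq_one_iff s |>.not.2 hs), gAux_exp, gAux_exp, mul_div_mul_left _ _ hs]

theorem uab_geomConvex_iff_general (a b : ℝ) :
    (∀ x y : ℝ, 0 < x → 0 < y →
      uab a b (Real.sqrt (x * y)) ≤ Real.sqrt (uab a b x * uab a b y)) ↔
    |b| ≤ |a| := by
  rw [geomConvex_iff_midpointConvex (uab_exp a b)]
  refine ⟨fun h => ?_, fun hab s r => ?_⟩
  · by_contra! hab
    have hmid := h 1 (-1)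
    simp only [add_neg_cancel, zero_div, mul_zero, sub_self, mul_one, mul_neg_one,
      logExpSlope] at hmid
    rw [← expSlope_mul_expSlope_neg_lt_iff] at hab
    have hlog := log_lt_log (mul_pos (expSlope_pos a) (expSlope_pos _)) hab
    rw [log_mul (expSlope_pos a).ne' (expSlope_pos _).ne',
      log_mul (expSlope_pos b).ne' (expSlope_pos _).ne'] at hlog
    linarith
  · have hconv := (convexOn_logExpSlope_mul_sub hab).2 (mem_univ s) (mem_univ r)
      (by norm_num : (0 : ℝ) ≤ 1 / 2) (by norm_num : (0 : ℝ) ≤ 1 / 2) (by norm_num)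
    simp only [smul_eq_mul] at hconv
    rw [show (s + r) / 2 = 1 / 2 * s + 1 / 2 * r by ring]
    linarith

/-- For `(a,b) ∈ Γ`, the function `u_{a,b}` is geometrically convex iff `|a| ≥ |b|`. -/
theorem uab_geomConvex_iff (a b : ℝ) (hΓ : (a, b) ∈ GammaRegion) :
    (∀ x y : ℝ, 0 < x → 0 < y →
      uab a b (Real.sqrt (x * y)) ≤ Real.sqrt (uab a b x * uab a b y)) ↔
    |b| ≤ |a| :=
  uab_geomConvex_iff_general a b
end

section
/- For α ∈ [−2,2] define the Stolarsky function s_α : (0,∞) → (0,∞) by s_α(t) = ((t^α − 1)/(α·(t − 1)))^{1/(α−1)} for α ∉ {0,1} and t ≠ 1, s_0(t) = (t − 1)/log t for t ≠ 1, s_1(t) = e^{−1}·t^{t/(t−1)} for t ≠ 1, and s_α(1) = 1. Then s_α is geometrically convex if and only if α ∈ [−1,2], and s_α is geometrically concave if and only if α ∈ [−2,−1]. -/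
/-!
Substituting `t = exp (2 * y)` gives `s_α t = exp (y + H_α y)`, where `H_α = stolarskyDefect α`
is `(R (α * y) - R y) / (α - 1)` with `R y = log (sinh y / y)`, and `H_1 y = y * R' y` is its
limit as `α → 1`. So geometric convexity (concavity) of `s_α` is midpoint convexity (concavity)
of `H_α`. Both `R` and `y ↦ y ^ 2 * R'' y = 1 - (y / sinh y) ^ 2` increase on `[0, ∞)`, hence
`H_α` and `H_α''` have the sign of `(|α| - 1) / (α - 1)` there. As `H_α` is even, for `α ≥ -1`
it is convex on `ℝ` (convex on `[0, ∞)` with its minimum at `0`), and for `α ≤ -1` it is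
concave. Conversely, midpoint convexity at `±1` means `0 ≤ H_α 1`, which fails for `α < -1`,
and midpoint concavity means `H_α 1 ≤ 0`, which fails for `α > -1`.
-/

/-- The Stolarsky function `s_α(t) = S_α(1,t)` with its continuous extensions. -/
noncomputable def stolarsky (α t : ℝ) : ℝ :=
  if t = 1 then 1
  else if α = 0 then (t - 1) / Real.log t
  else if α = 1 then Real.exp (-1) * t ^ (t / (t - 1))
  else ((t ^ α - 1) / (α * (t - 1))) ^ (1 / (α - 1))

open Real Set Filter Topology

lemma hasDerivAt_comp_const_mul {F F' : ℝ → ℝ} (hF : ∀ z, z ≠ 0 → HasDerivAt F (F' z) z)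
    (a : ℝ) {y : ℝ} (hy : y ≠ 0) : HasDerivAt (fun y => F (a * y)) (a * F' (a * y)) y := by
  rcases eq_or_ne a 0 with rfl | ha
  · simpa using hasDerivAt_const y (F 0)
  · exact ((hF (a * y) (mul_ne_zero ha hy)).comp y ((hasDerivAt_id' y).const_mul a)).congr_deriv
      (by ring)

lemma ConvexOn.univ_of_even {H : ℝ → ℝ} (hconv : ConvexOn ℝ (Ici 0) H) (heven : Function.Even H)
    (hmin : ∀ y, 0 ≤ y → H 0 ≤ H y) : ConvexOn ℝ univ H := by
  have hmono : MonotoneOn H (Ici 0) := fun a ha b hb hab => by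
    rcases (mem_Ici.1 ha).eq_or_lt with rfl | ha0
    · exact hmin b hb
    · exact hconv.le_right_of_left_le'' self_mem_Ici hb ha0 hab (hmin a ha)
  have habs : ∀ y, H |y| = H y := fun y => by
    rcases abs_choice y with h | h <;> simp [h, heven.eq]
  refine ⟨convex_univ, fun x _ y _ a b ha hb hab => ?_⟩
  simp only [smul_eq_mul]
  calc H (a * x + b * y) = H |a * x + b * y| := (habs _).symm
    _ ≤ H (a * |x| + b * |y|) := by
      refine hmono (mem_Ici.2 (abs_nonneg _)) (mem_Ici.2 (by positivity)) ?_
      simpa [abs_mul, abs_of_nonneg ha, abs_of_nonneg hb] using abs_add_le (a * x) (b * y)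
    _ ≤ a * H |x| + b * H |y| :=
      hconv.2 (abs_nonneg x) (abs_nonneg y) ha hb hab
    _ = a * H x + b * H y := by rw [habs, habs]

lemma ConcaveOn.univ_of_even {H : ℝ → ℝ} (hconc : ConcaveOn ℝ (Ici 0) H)
    (heven : Function.Even H) (hmax : ∀ y, 0 ≤ y → H y ≤ H 0) : ConcaveOn ℝ univ H := by
  have := hconc.neg.univ_of_even (fun y => by simp [heven.eq])
    (fun y hy => by simpa using hmax y hy)
  simpa using this.neg

lemma ConvexOn.map_add_div_two_le {H : ℝ → ℝ} (hH : ConvexOn ℝ univ H) (a b : ℝ) :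
    H ((a + b) / 2) ≤ (H a + H b) / 2 := by
  have := hH.2 (mem_univ a) (mem_univ b) (by norm_num : (0 : ℝ) ≤ 1 / 2)
    (by norm_num : (0 : ℝ) ≤ 1 / 2) (by norm_num)
  simp only [smul_eq_mul] at this
  calc H ((a + b) / 2) = H (1 / 2 * a + 1 / 2 * b) := by ring_nf
    _ ≤ 1 / 2 * H a + 1 / 2 * H b := this
    _ = (H a + H b) / 2 := by ring

lemma ConcaveOn.add_div_two_le_map {H : ℝ → ℝ} (hH : ConcaveOn ℝ univ H) (a b : ℝ) :
    (H a + H b) / 2 ≤ H ((a + b) / 2) := by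
  have := hH.neg.map_add_div_two_le a b
  simp only [Pi.neg_apply] at this
  linarith

section SignOfScaledDifference

variable {F : ℝ → ℝ} {α y : ℝ}

lemma MonotoneOn.abs_mul_sub_div_nonneg (hF : MonotoneOn F (Ici 0)) (hα : -1 ≤ α)
    (hy : 0 ≤ y) : 0 ≤ (F (|α| * y) - F y) / (α - 1) := by
  have hαy : |α| * y ∈ Ici 0 := mul_nonneg (abs_nonneg α) hy
  rcases lt_trichotomy α 1 with h | rfl | h
  · refine div_nonneg_of_nonpos (sub_nonpos.2 (hF hαy hy ?_)) (by linarith)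
    exact mul_le_of_le_one_left hy (abs_le.2 ⟨hα, h.le⟩)
  · simp
  · refine div_nonneg (sub_nonneg.2 (hF hy hαy ?_)) (by linarith)
    exact le_mul_of_one_le_left hy (h.le.trans (le_abs_self α))

lemma MonotoneOn.abs_mul_sub_div_nonpos (hF : MonotoneOn F (Ici 0)) (hα : α ≤ -1)
    (hy : 0 ≤ y) : (F (|α| * y) - F y) / (α - 1) ≤ 0 := by
  refine div_nonpos_of_nonneg_of_nonpos (sub_nonneg.2 (hF hy (mul_nonneg (abs_nonneg α) hy) ?_))
    (by linarith)
  exact le_mul_of_one_le_left hy (le_abs.2 (Or.inr (by linarith)))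

lemma StrictMonoOn.abs_mul_sub_div_pos (hF : StrictMonoOn F (Ici 0)) (hα : -1 < α)
    (hα1 : α ≠ 1) (hy : 0 < y) : 0 < (F (|α| * y) - F y) / (α - 1) := by
  have hαy : |α| * y ∈ Ici 0 := mul_nonneg (abs_nonneg α) hy.le
  rcases hα1.lt_or_gt with h | h
  · refine div_pos_of_neg_of_neg (sub_neg.2 (hF hαy hy.le ?_)) (by linarith)
    exact mul_lt_of_lt_one_left hy (abs_lt.2 ⟨hα, h⟩)
  · refine div_pos (sub_pos.2 (hF hy.le hαy ?_)) (by linarith)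
    exact lt_mul_of_one_lt_left hy (h.trans_le (le_abs_self α))

lemma StrictMonoOn.abs_mul_sub_div_neg (hF : StrictMonoOn F (Ici 0)) (hα : α < -1)
    (hy : 0 < y) : (F (|α| * y) - F y) / (α - 1) < 0 := by
  refine div_neg_of_pos_of_neg (sub_pos.2 (hF hy.le (mul_nonneg (abs_nonneg α) hy.le) ?_))
    (by linarith)
  exact lt_mul_of_one_lt_left hy (lt_abs.2 (Or.inr (by linarith)))

end SignOfScaledDifference

lemma exists_exp_two_mul_eq {x : ℝ} (hx : 0 < x) : ∃ a, exp (2 * a) = x :=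
  ⟨log x / 2, by rw [mul_div_cancel₀ _ two_ne_zero, exp_log hx]⟩

section GeometricConvexity

variable {f g : ℝ → ℝ}

lemma sqrt_exp_mul_exp (a b : ℝ) : √(exp a * exp b) = exp ((a + b) / 2) := by
  rw [← exp_add, exp_half]

lemma apply_sqrt_exp_two_mul_mul (hf : ∀ y, f (exp (2 * y)) = exp (y + g y)) (a b : ℝ) :
    f √(exp (2 * a) * exp (2 * b)) = exp ((a + b) / 2 + g ((a + b) / 2)) := by
  rw [sqrt_exp_mul_exp, ← hf]
  ring_nf

lemma sqrt_apply_exp_two_mul_mul (hf : ∀ y, f (exp (2 * y)) = exp (y + g y)) (a b : ℝ) :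
    √(f (exp (2 * a)) * f (exp (2 * b))) = exp ((a + b) / 2 + (g a + g b) / 2) := by
  rw [hf, hf, sqrt_exp_mul_exp]
  ring_nf

lemma geomConvex_iff_midpoint_le (hf : ∀ y, f (exp (2 * y)) = exp (y + g y)) :
    (∀ x y : ℝ, 0 < x → 0 < y → f √(x * y) ≤ √(f x * f y)) ↔
      ∀ a b : ℝ, g ((a + b) / 2) ≤ (g a + g b) / 2 := by
  refine ⟨fun H a b => ?_, fun H x y hx hy => ?_⟩
  · have := H _ _ (exp_pos (2 * a)) (exp_pos (2 * b))
    rwa [apply_sqrt_exp_two_mul_mul hf, sqrt_apply_exp_two_mul_mul hf, exp_le_exp,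
      add_le_add_iff_left] at this
  · obtain ⟨a, rfl⟩ := exists_exp_two_mul_eq hx
    obtain ⟨b, rfl⟩ := exists_exp_two_mul_eq hy
    rw [apply_sqrt_exp_two_mul_mul hf, sqrt_apply_exp_two_mul_mul hf, exp_le_exp,
      add_le_add_iff_left]
    exact H a b

lemma geomConcave_iff_le_midpoint (hf : ∀ y, f (exp (2 * y)) = exp (y + g y)) :
    (∀ x y : ℝ, 0 < x → 0 < y → √(f x * f y) ≤ f √(x * y)) ↔
      ∀ a b : ℝ, (g a + g b) / 2 ≤ g ((a + b) / 2) := by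
  refine ⟨fun H a b => ?_, fun H x y hx hy => ?_⟩
  · have := H _ _ (exp_pos (2 * a)) (exp_pos (2 * b))
    rwa [apply_sqrt_exp_two_mul_mul hf, sqrt_apply_exp_two_mul_mul hf, exp_le_exp,
      add_le_add_iff_left] at this
  · obtain ⟨a, rfl⟩ := exists_exp_two_mul_eq hx
    obtain ⟨b, rfl⟩ := exists_exp_two_mul_eq hy
    rw [apply_sqrt_exp_two_mul_mul hf, sqrt_apply_exp_two_mul_mul hf, exp_le_exp,
      add_le_add_iff_left]
    exact H a b

end GeometricConvexity

namespace Real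

lemma sinh_lt_mul_cosh {y : ℝ} (hy : 0 < y) : sinh y < y * cosh y := by
  have hmono : StrictMonoOn (fun y => y * cosh y - sinh y) (Ici 0) := by
    refine strictMonoOn_of_hasDerivWithinAt_pos (convex_Ici 0) (by fun_prop)
      (f' := fun y => y * sinh y) (fun x _ => ?_) (fun x hx => ?_)
    · exact (((hasDerivAt_id' x).mul (hasDerivAt_cosh x)).sub
        (hasDerivAt_sinh x)).hasDerivWithinAt.congr_deriv (by ring)
    · rw [interior_Ici] at hx
      exact mul_pos hx (sinh_pos_iff.2 hx)
  simpa using hmono self_mem_Ici hy.le hy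

lemma sinh_div_self_pos {y : ℝ} (hy : y ≠ 0) : 0 < sinh y / y := by
  rcases hy.lt_or_gt with h | h
  · exact div_pos_of_neg_of_neg (sinh_neg_iff.2 h) h
  · exact div_pos (sinh_pos_iff.2 h) h

lemma tendsto_sinh_div_self : Tendsto (fun y => sinh y / y) (𝓝[≠] 0) (𝓝 1) := by
  have := (hasDerivAt_sinh 0).tendsto_slope
  rw [cosh_zero] at this
  refine this.congr fun y => ?_
  rw [slope_def_field, sinh_zero, sub_zero, sub_zero]

lemma exp_two_mul_sub_one (y : ℝ) : exp (2 * y) - 1 = 2 * exp y * sinh y := by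
  have h1 : exp y * exp y = exp (2 * y) := by rw [← exp_add, two_mul]
  have h2 : exp y * exp (-y) = 1 := by rw [← exp_add, add_neg_cancel, exp_zero]
  rw [sinh_eq]
  linear_combination h2 - h1

end Real

/-- At `y = 0` the junk values `0 / 0 = 0` and `log 0 = 0` give the continuous extension. -/
noncomputable def logSinhDiv (y : ℝ) : ℝ := log (sinh y / y)

noncomputable def logSinhDivDeriv (y : ℝ) : ℝ := cosh y / sinh y - 1 / y

noncomputable def logSinhDivDeriv2 (y : ℝ) : ℝ := 1 / y ^ 2 - 1 / sinh y ^ 2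

lemma logSinhDiv_zero : logSinhDiv 0 = 0 := by simp [logSinhDiv]

lemma logSinhDiv_even : Function.Even logSinhDiv := fun y => by
  simp [logSinhDiv, neg_div_neg_eq]

lemma logSinhDivDeriv2_even : Function.Even logSinhDivDeriv2 := fun y => by
  simp [logSinhDivDeriv2]

lemma logSinhDivDeriv_odd : Function.Odd logSinhDivDeriv := fun y => by
  simp only [logSinhDivDeriv, sinh_neg, cosh_neg, div_neg]
  ring

lemma hasDerivAt_logSinhDiv {y : ℝ} (hy : y ≠ 0) :
    HasDerivAt logSinhDiv (logSinhDivDeriv y) y := by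
  have hs : sinh y ≠ 0 := sinh_ne_zero.2 hy
  refine (((hasDerivAt_sinh y).div (hasDerivAt_id' y) hy).log
    (sinh_div_self_pos hy).ne').congr_deriv ?_
  rw [logSinhDivDeriv, Pi.div_apply]
  field_simp

lemma hasDerivAt_logSinhDivDeriv {y : ℝ} (hy : y ≠ 0) :
    HasDerivAt logSinhDivDeriv (logSinhDivDeriv2 y) y := by
  have hs : sinh y ≠ 0 := sinh_ne_zero.2 hy
  refine (((hasDerivAt_cosh y).div (hasDerivAt_sinh y) hs).sub
    ((hasDerivAt_const y (1 : ℝ)).div (hasDerivAt_id' y) hy)).congr_deriv ?_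
  rw [logSinhDivDeriv2]
  field_simp
  linear_combination (-y ^ 2) * cosh_sq_sub_sinh_sq y

lemma continuous_logSinhDiv : Continuous logSinhDiv := by
  refine continuous_iff_continuousAt.2 fun y => ?_
  rcases eq_or_ne y 0 with rfl | hy
  · rw [continuousAt_iff_punctured_nhds, logSinhDiv_zero]
    have := (continuousAt_log one_ne_zero).tendsto.comp tendsto_sinh_div_self
    rwa [log_one] at this
  · exact (hasDerivAt_logSinhDiv hy).continuousAt

lemma logSinhDivDeriv_pos {y : ℝ} (hy : 0 < y) : 0 < logSinhDivDeriv y := by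
  rw [logSinhDivDeriv, sub_pos, div_lt_div_iff₀ hy (sinh_pos_iff.2 hy), one_mul, mul_comm]
  exact sinh_lt_mul_cosh hy

lemma strictMonoOn_logSinhDiv : StrictMonoOn logSinhDiv (Ici 0) := by
  refine strictMonoOn_of_deriv_pos (convex_Ici 0) continuous_logSinhDiv.continuousOn fun y hy => ?_
  rw [interior_Ici] at hy
  rw [(hasDerivAt_logSinhDiv (ne_of_gt hy)).deriv]
  exact logSinhDivDeriv_pos hy

lemma sq_mul_logSinhDivDeriv2 (y : ℝ) :
    y ^ 2 * logSinhDivDeriv2 y = 1 - exp (-2 * logSinhDiv y) := by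
  rcases eq_or_ne y 0 with rfl | hy
  · simp [logSinhDiv_zero]
  have hs : sinh y ≠ 0 := sinh_ne_zero.2 hy
  rw [logSinhDiv, mul_comm (-2 : ℝ), ← rpow_def_of_pos (sinh_div_self_pos hy), rpow_neg
    (sinh_div_self_pos hy).le, rpow_two, logSinhDivDeriv2]
  field_simp

lemma monotoneOn_sq_mul_logSinhDivDeriv2 :
    MonotoneOn (fun y => y ^ 2 * logSinhDivDeriv2 y) (Ici 0) := fun a ha b hb hab => by
  have := strictMonoOn_logSinhDiv.monotoneOn ha hb hab
  simp only [sq_mul_logSinhDivDeriv2]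
  exact sub_le_sub_left (exp_le_exp.2 (by linarith)) 1

lemma sq_mul_logSinhDivDeriv2_sub {y : ℝ} (α : ℝ) (hy : y ≠ 0) :
    α ^ 2 * logSinhDivDeriv2 (α * y) - logSinhDivDeriv2 y =
      ((|α| * y) ^ 2 * logSinhDivDeriv2 (|α| * y) - y ^ 2 * logSinhDivDeriv2 y) / y ^ 2 := by
  have habs :
      (|α| * y) ^ 2 * logSinhDivDeriv2 (|α| * y) = (α * y) ^ 2 * logSinhDivDeriv2 (α * y) := by
    rcases abs_choice α with h | h <;> simp [h, logSinhDivDeriv2_even.eq]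
  rw [habs]
  field_simp

noncomputable def stolarskyDefect (α y : ℝ) : ℝ :=
  if α = 1 then y * logSinhDivDeriv y else (logSinhDiv (α * y) - logSinhDiv y) / (α - 1)

section StolarskyDefect

variable {α y : ℝ}

lemma stolarskyDefect_one (y : ℝ) : stolarskyDefect 1 y = y * logSinhDivDeriv y := if_pos rfl

lemma stolarskyDefect_of_ne_one (hα : α ≠ 1) :
    stolarskyDefect α = fun y => (logSinhDiv (α * y) - logSinhDiv y) / (α - 1) :=
  funext fun _ => if_neg hα

lemma stolarskyDefect_eq_abs (hα : α ≠ 1) (y : ℝ) :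
    stolarskyDefect α y = (logSinhDiv (|α| * y) - logSinhDiv y) / (α - 1) := by
  rw [stolarskyDefect_of_ne_one hα]
  rcases abs_choice α with h | h <;> simp [h, logSinhDiv_even.eq]

lemma stolarskyDefect_apply_zero (α : ℝ) : stolarskyDefect α 0 = 0 := by
  simp [stolarskyDefect, logSinhDiv_zero]

lemma stolarskyDefect_even (α : ℝ) : Function.Even (stolarskyDefect α) := fun y => by
  unfold stolarskyDefect
  split_ifs
  · rw [logSinhDivDeriv_odd.eq]
    ring
  · rw [mul_neg, logSinhDiv_even.eq, logSinhDiv_even.eq]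

lemma stolarskyDefect_pos (hα : -1 < α) (hy : 0 < y) : 0 < stolarskyDefect α y := by
  rcases eq_or_ne α 1 with rfl | hα1
  · rw [stolarskyDefect_one]
    exact mul_pos hy (logSinhDivDeriv_pos hy)
  · rw [stolarskyDefect_eq_abs hα1]
    exact strictMonoOn_logSinhDiv.abs_mul_sub_div_pos hα hα1 hy

lemma stolarskyDefect_neg (hα : α < -1) (hy : 0 < y) : stolarskyDefect α y < 0 := by
  rw [stolarskyDefect_eq_abs (by linarith)]
  exact strictMonoOn_logSinhDiv.abs_mul_sub_div_neg hα hy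

lemma hasDerivAt_stolarskyDefect (hα : α ≠ 1) (hy : y ≠ 0) :
    HasDerivAt (stolarskyDefect α)
      ((α * logSinhDivDeriv (α * y) - logSinhDivDeriv y) / (α - 1)) y := by
  rw [stolarskyDefect_of_ne_one hα]
  exact ((hasDerivAt_comp_const_mul (fun _ => hasDerivAt_logSinhDiv) α hy).sub
    (hasDerivAt_logSinhDiv hy)).div_const _

lemma hasDerivAt_stolarskyDefect_deriv (α : ℝ) (hy : y ≠ 0) :
    HasDerivAt (fun y => (α * logSinhDivDeriv (α * y) - logSinhDivDeriv y) / (α - 1))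
      ((α ^ 2 * logSinhDivDeriv2 (α * y) - logSinhDivDeriv2 y) / (α - 1)) y := by
  refine (((hasDerivAt_comp_const_mul (fun _ => hasDerivAt_logSinhDivDeriv) α hy).const_mul α).sub
    (hasDerivAt_logSinhDivDeriv hy)).div_const _ |>.congr_deriv ?_
  ring

lemma continuous_stolarskyDefect (hα : α ≠ 1) : Continuous (stolarskyDefect α) := by
  rw [stolarskyDefect_of_ne_one hα]
  exact ((continuous_logSinhDiv.comp (continuous_const_mul α)).sub
    continuous_logSinhDiv).div_const _

lemma stolarskyDefect_convexOn_Ici (hα : -1 ≤ α) (hα1 : α ≠ 1) :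
    ConvexOn ℝ (Ici 0) (stolarskyDefect α) := by
  refine convexOn_of_hasDerivWithinAt2_nonneg (convex_Ici 0)
    (continuous_stolarskyDefect hα1).continuousOn
    (f' := fun y => (α * logSinhDivDeriv (α * y) - logSinhDivDeriv y) / (α - 1))
    (f'' := fun y => (α ^ 2 * logSinhDivDeriv2 (α * y) - logSinhDivDeriv2 y) / (α - 1))
    (fun y hy => ?_) (fun y hy => ?_) (fun y hy => ?_) <;>
  rw [interior_Ici, mem_Ioi] at hy
  · exact (hasDerivAt_stolarskyDefect hα1 hy.ne').hasDerivWithinAt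
  · exact (hasDerivAt_stolarskyDefect_deriv α hy.ne').hasDerivWithinAt
  · rw [sq_mul_logSinhDivDeriv2_sub α hy.ne', div_right_comm]
    exact div_nonneg (monotoneOn_sq_mul_logSinhDivDeriv2.abs_mul_sub_div_nonneg hα hy.le)
      (by positivity)

lemma stolarskyDefect_concaveOn_Ici (hα : α ≤ -1) :
    ConcaveOn ℝ (Ici 0) (stolarskyDefect α) := by
  have hα1 : α ≠ 1 := by linarith
  refine concaveOn_of_hasDerivWithinAt2_nonpos (convex_Ici 0)
    (continuous_stolarskyDefect hα1).continuousOn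
    (f' := fun y => (α * logSinhDivDeriv (α * y) - logSinhDivDeriv y) / (α - 1))
    (f'' := fun y => (α ^ 2 * logSinhDivDeriv2 (α * y) - logSinhDivDeriv2 y) / (α - 1))
    (fun y hy => ?_) (fun y hy => ?_) (fun y hy => ?_) <;>
  rw [interior_Ici, mem_Ioi] at hy
  · exact (hasDerivAt_stolarskyDefect hα1 hy.ne').hasDerivWithinAt
  · exact (hasDerivAt_stolarskyDefect_deriv α hy.ne').hasDerivWithinAt
  · rw [sq_mul_logSinhDivDeriv2_sub α hy.ne', div_right_comm]
    exact div_nonpos_of_nonpos_of_nonneg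
      (monotoneOn_sq_mul_logSinhDivDeriv2.abs_mul_sub_div_nonpos hα hy.le) (by positivity)

lemma stolarskyDefect_convexOn (hα : -1 ≤ α) (hα1 : α ≠ 1) :
    ConvexOn ℝ univ (stolarskyDefect α) := by
  refine (stolarskyDefect_convexOn_Ici hα hα1).univ_of_even (stolarskyDefect_even α) fun y hy => ?_
  rw [stolarskyDefect_apply_zero, stolarskyDefect_eq_abs hα1]
  exact strictMonoOn_logSinhDiv.monotoneOn.abs_mul_sub_div_nonneg hα hy

lemma stolarskyDefect_concaveOn (hα : α ≤ -1) : ConcaveOn ℝ univ (stolarskyDefect α) := by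
  refine (stolarskyDefect_concaveOn_Ici hα).univ_of_even (stolarskyDefect_even α) fun y hy => ?_
  rw [stolarskyDefect_apply_zero, stolarskyDefect_eq_abs (by linarith)]
  exact strictMonoOn_logSinhDiv.monotoneOn.abs_mul_sub_div_nonpos hα hy

lemma tendsto_stolarskyDefect_one (y : ℝ) :
    Tendsto (fun α => stolarskyDefect α y) (𝓝[≠] 1) (𝓝 (stolarskyDefect 1 y)) := by
  rcases eq_or_ne y 0 with rfl | hy
  · simpa only [stolarskyDefect_apply_zero] using tendsto_const_nhds
  have hderiv : HasDerivAt (fun β => logSinhDiv (y * β)) (stolarskyDefect 1 y) 1 := by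
    simpa [stolarskyDefect_one] using
      hasDerivAt_comp_const_mul (fun _ => hasDerivAt_logSinhDiv) y one_ne_zero
  refine hderiv.tendsto_slope.congr' ?_
  filter_upwards [self_mem_nhdsWithin] with α (hα : α ≠ 1)
  rw [slope_def_field, stolarskyDefect, if_neg hα, mul_one, mul_comm y]

lemma stolarskyDefect_midpoint_le (hα : -1 ≤ α) (a b : ℝ) :
    stolarskyDefect α ((a + b) / 2) ≤ (stolarskyDefect α a + stolarskyDefect α b) / 2 := by
  rcases eq_or_ne α 1 with rfl | hα1
  · refine le_of_tendsto_of_tendsto (tendsto_stolarskyDefect_one _)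
      (((tendsto_stolarskyDefect_one a).add (tendsto_stolarskyDefect_one b)).div_const 2) ?_
    filter_upwards [self_mem_nhdsWithin,
      nhdsWithin_le_nhds (Ioi_mem_nhds (show (-1 : ℝ) < 1 by norm_num))] with β hβ1 hβ
    exact (stolarskyDefect_convexOn (le_of_lt hβ) hβ1).map_add_div_two_le a b
  · exact (stolarskyDefect_convexOn hα hα1).map_add_div_two_le a b

end StolarskyDefect

section StolarskyRepresentation

variable {α y : ℝ}

lemma stolarsky_zero_exp_two_mul (hy : y ≠ 0) :
    stolarsky 0 (exp (2 * y)) = exp (y + stolarskyDefect 0 y) := by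
  have hx1 : exp (2 * y) ≠ 1 := by simpa using hy
  have hdef : stolarskyDefect 0 y = logSinhDiv y := by
    simp [stolarskyDefect, logSinhDiv_zero]
  rw [stolarsky, if_neg hx1, if_pos rfl, hdef, exp_add, logSinhDiv, exp_log (sinh_div_self_pos hy),
    log_exp, exp_two_mul_sub_one]
  field_simp

lemma stolarsky_one_exp_two_mul (hy : y ≠ 0) :
    stolarsky 1 (exp (2 * y)) = exp (y + stolarskyDefect 1 y) := by
  have hx1 : exp (2 * y) ≠ 1 := by simpa using hy
  have hs : sinh y ≠ 0 := sinh_ne_zero.2 hy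
  have hsq : exp (2 * y) = exp y * exp y := by rw [← exp_add, two_mul]
  have hcosh : cosh y = exp y - sinh y := by linarith [cosh_add_sinh y]
  rw [stolarsky, if_neg hx1, if_neg one_ne_zero, if_pos rfl, ← exp_mul, ← exp_add,
    stolarskyDefect_one, logSinhDivDeriv, exp_two_mul_sub_one, hcosh, hsq]
  congr 1
  field_simp
  ring

lemma stolarsky_exp_two_mul_of_ne (hα0 : α ≠ 0) (hα1 : α ≠ 1) (hy : y ≠ 0) :
    stolarsky α (exp (2 * y)) = exp (y + stolarskyDefect α y) := by
  have hx1 : exp (2 * y) ≠ 1 := by simpa using hy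
  have hαy : α * y ≠ 0 := mul_ne_zero hα0 hy
  have hα1' : α - 1 ≠ 0 := sub_ne_zero.2 hα1
  have hbase : (exp (2 * y) ^ α - 1) / (α * (exp (2 * y) - 1)) =
      exp ((α - 1) * y + (logSinhDiv (α * y) - logSinhDiv y)) := by
    rw [exp_add, exp_sub, logSinhDiv, logSinhDiv, exp_log (sinh_div_self_pos hαy),
      exp_log (sinh_div_self_pos hy), ← exp_mul, show 2 * y * α = 2 * (α * y) by ring,
      exp_two_mul_sub_one, exp_two_mul_sub_one, sub_mul, exp_sub]
    field_simp
  rw [stolarsky, if_neg hx1, if_neg hα0, if_neg hα1, hbase, ← exp_mul,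
    stolarskyDefect_of_ne_one hα1]
  congr 1
  field_simp

lemma stolarsky_exp_two_mul (α y : ℝ) :
    stolarsky α (exp (2 * y)) = exp (y + stolarskyDefect α y) := by
  rcases eq_or_ne y 0 with rfl | hy
  · simp [stolarsky, stolarskyDefect_apply_zero]
  rcases eq_or_ne α 0 with rfl | hα0
  · exact stolarsky_zero_exp_two_mul hy
  rcases eq_or_ne α 1 with rfl | hα1
  · exact stolarsky_one_exp_two_mul hy
  exact stolarsky_exp_two_mul_of_ne hα0 hα1 hy

end StolarskyRepresentation

/-- For `α ∈ [-2,2]`, the Stolarsky function is geometrically convex iff `α ∈ [-1,2]`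
and geometrically concave iff `α ∈ [-2,-1]`. -/
theorem stolarsky_geomConvex_iff (α : ℝ) (hα : α ∈ Set.Icc (-2 : ℝ) 2) :
    ((∀ x y : ℝ, 0 < x → 0 < y →
        stolarsky α (Real.sqrt (x * y)) ≤
          Real.sqrt (stolarsky α x * stolarsky α y)) ↔ α ∈ Set.Icc (-1 : ℝ) 2) ∧
    ((∀ x y : ℝ, 0 < x → 0 < y →
        Real.sqrt (stolarsky α x * stolarsky α y) ≤
          stolarsky α (Real.sqrt (x * y))) ↔ α ∈ Set.Icc (-2 : ℝ) (-1)) := by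
  rw [geomConvex_iff_midpoint_le (stolarsky_exp_two_mul α),
    geomConcave_iff_le_midpoint (stolarsky_exp_two_mul α)]
  have hsymm : (stolarskyDefect α 1 + stolarskyDefect α (-1)) / 2 = stolarskyDefect α 1 := by
    rw [(stolarskyDefect_even α).eq]
    ring
  refine ⟨⟨fun H => ⟨?_, hα.2⟩, fun h a b => stolarskyDefect_midpoint_le h.1 a b⟩,
    ⟨fun H => ⟨hα.1, ?_⟩, fun h => (stolarskyDefect_concaveOn h.2).add_div_two_le_map⟩⟩
  · have h1 := H 1 (-1)
    rw [add_neg_cancel, zero_div, stolarskyDefect_apply_zero, hsymm] at h1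
    by_contra! h
    exact (stolarskyDefect_neg h one_pos).not_ge h1
  · have h1 := H 1 (-1)
    rw [add_neg_cancel, zero_div, stolarskyDefect_apply_zero, hsymm] at h1
    by_contra! h
    exact (stolarskyDefect_pos h one_pos).not_ge h1
end

section
/- Let α ≥ 1 and let f : (0,∞) → (0,∞) be continuous and monotone increasing, and define g : (0,∞) → (0,∞) by g(t) = t^α·f(t). Then g is a strictly increasing continuous bijection of (0,∞) onto (0,∞), and f is geometrically convex if and only if the inverse function g⁻¹ is geometrically concave. -/
/-!
Write `g t = t ^ α * f t`. Since `√(u v) ^ α = √(u ^ α v ^ α)`, the power factor cancels from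
both sides of `g (√(u v)) ≤ √(g u g v)`, so `g` is geometrically convex exactly when `f` is.
For an increasing bijection of `(0, ∞)`, geometric convexity of the function is geometric
concavity of its inverse, read through the monotonicity of `g`. That `g` is such a bijection
follows from the intermediate value theorem: `g → 0` at `0⁺` and `g → ∞` at `∞`,
because `f` is squeezed by `f 1` on either side of `1`.
-/

open Real Set Filter Topology

def GeomConvex (f : ℝ → ℝ) : Prop :=
  ∀ x y : ℝ, 0 < x → 0 < y → f (√(x * y)) ≤ √(f x * f y)

def GeomConcave (f : ℝ → ℝ) : Prop :=
  ∀ x y : ℝ, 0 < x → 0 < y → √(f x * f y) ≤ f (√(x * y))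

lemma sqrt_rpow_of_nonneg {x : ℝ} (hx : 0 ≤ x) (α : ℝ) : √(x ^ α) = √x ^ α := by
  rw [sqrt_eq_rpow, sqrt_eq_rpow, ← rpow_mul hx, ← rpow_mul hx, mul_comm]

lemma sqrt_rpow_mul_mul_rpow_mul {u v : ℝ} (hu : 0 ≤ u) (hv : 0 ≤ v) (α a b : ℝ) :
    √(u ^ α * a * (v ^ α * b)) = √(u * v) ^ α * √(a * b) := by
  have hprod : u ^ α * a * (v ^ α * b) = (u * v) ^ α * (a * b) := by
    rw [mul_rpow hu hv]; ring
  rw [hprod, sqrt_mul (by positivity), sqrt_rpow_of_nonneg (mul_nonneg hu hv)]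

theorem geomConvex_rpow_mul_iff (α : ℝ) (f : ℝ → ℝ) :
    GeomConvex (fun t => t ^ α * f t) ↔ GeomConvex f := by
  refine forall₄_congr fun u v hu hv => ?_
  rw [sqrt_rpow_mul_mul_rpow_mul hu.le hv.le]
  exact mul_le_mul_iff_right₀ (rpow_pos_of_pos (sqrt_pos.2 (mul_pos hu hv)) α)

theorem geomConvex_iff_geomConcave_of_invOn {g ginv : ℝ → ℝ}
    (hg : StrictMonoOn g (Ioi 0)) (hg_maps : MapsTo g (Ioi 0) (Ioi 0))
    (hginv_maps : MapsTo ginv (Ioi 0) (Ioi 0)) (hinv : InvOn ginv g (Ioi 0) (Ioi 0)) :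
    GeomConvex g ↔ GeomConcave ginv := by
  have sqrt_mem {x y : ℝ} (hx : 0 < x) (hy : 0 < y) : √(x * y) ∈ Ioi 0 :=
    sqrt_pos.2 (mul_pos hx hy)
  constructor
  · intro hconv x y hx hy
    have hu := hginv_maps hx
    have hv := hginv_maps hy
    rw [← hg.le_iff_le (sqrt_mem hu hv) (hginv_maps (sqrt_mem hx hy)),
      hinv.2 (sqrt_mem hx hy)]
    calc g √(ginv x * ginv y) ≤ √(g (ginv x) * g (ginv y)) := hconv _ _ hu hv
      _ = √(x * y) := by rw [hinv.2 hx, hinv.2 hy]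
  · intro hconc x y hx hy
    have hgx := hg_maps hx
    have hgy := hg_maps hy
    have hw := sqrt_mem hgx hgy
    rw [← hinv.2 hw, hg.le_iff_le (sqrt_mem hx hy) (hginv_maps hw)]
    calc √(x * y) = √(ginv (g x) * ginv (g y)) := by rw [hinv.1 hx, hinv.1 hy]
      _ ≤ ginv √(g x * g y) := hconc _ _ hgx hgy

theorem surjOn_Ioi_zero_of_tendsto {g : ℝ → ℝ} (hg : ContinuousOn g (Ioi 0))
    (h_zero : Tendsto g (𝓝[>] 0) (𝓝 0)) (h_top : Tendsto g atTop atTop) :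
    SurjOn g (Ioi 0) (Ioi 0) := by
  intro s hs
  obtain ⟨a, hga, ha⟩ := ((h_zero.eventually (gt_mem_nhds hs)).and self_mem_nhdsWithin).exists
  obtain ⟨b, hgb, hb⟩ := ((h_top.eventually_ge_atTop s).and (eventually_gt_atTop 0)).exists
  exact hg.surjOn_Icc ha hb ⟨hga.le, hgb⟩

section RpowMul

variable {α : ℝ} {f : ℝ → ℝ}

theorem strictMonoOn_rpow_mul (hα : 0 < α) (hf_pos : ∀ t : ℝ, 0 < t → 0 < f t)
    (hf_mono : MonotoneOn f (Ioi 0)) : StrictMonoOn (fun t => t ^ α * f t) (Ioi 0) := by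
  intro a (ha : 0 < a) b (hb : 0 < b) hab
  calc a ^ α * f a < b ^ α * f a := by gcongr; exact hf_pos a ha
    _ ≤ b ^ α * f b := by gcongr; exact hf_mono ha hb hab.le

theorem tendsto_rpow_mul_nhdsGT_zero (hα : 0 < α) (hf_pos : ∀ t : ℝ, 0 < t → 0 < f t)
    (hf_mono : MonotoneOn f (Ioi 0)) :
    Tendsto (fun t => t ^ α * f t) (𝓝[>] 0) (𝓝 0) := by
  have h_bound : Tendsto (fun t : ℝ => t ^ α * f 1) (𝓝[>] 0) (𝓝 0) := by
    have := ((continuousAt_rpow_const 0 α (Or.inr hα.le)).tendsto.mul_const (f 1)).mono_left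
      (nhdsWithin_le_nhds (s := Ioi 0))
    rwa [zero_rpow hα.ne', zero_mul] at this
  refine tendsto_of_tendsto_of_tendsto_of_le_of_le' tendsto_const_nhds h_bound ?_ ?_
  · filter_upwards [self_mem_nhdsWithin] with t (ht : 0 < t)
    exact (mul_pos (rpow_pos_of_pos ht α) (hf_pos t ht)).le
  · filter_upwards [Ioo_mem_nhdsGT one_pos] with t ⟨ht, ht1⟩
    gcongr
    exact hf_mono ht (mem_Ioi.2 one_pos) ht1.le

theorem tendsto_rpow_mul_atTop (hα : 0 < α) (hf_pos : ∀ t : ℝ, 0 < t → 0 < f t)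
    (hf_mono : MonotoneOn f (Ioi 0)) :
    Tendsto (fun t => t ^ α * f t) atTop atTop := by
  refine tendsto_atTop_mono' _ ?_ ((tendsto_rpow_atTop hα).atTop_mul_const (hf_pos 1 one_pos))
  filter_upwards [eventually_ge_atTop 1] with t ht
  have ht0 : 0 < t := one_pos.trans_le ht
  gcongr
  exact hf_mono (mem_Ioi.2 one_pos) ht0 ht

end RpowMul

/-- For `α ≥ 1` and `f` positive continuous monotone increasing on `(0,∞)`, the
function `g t = t^α * f t` is a strictly increasing continuous bijection of `(0,∞)`
onto itself, and `f` is geometrically convex iff the inverse of `g` is geometrically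
concave. -/
theorem geomConvex_iff_inverse_geomConcave (α : ℝ) (hα : 1 ≤ α) (f : ℝ → ℝ)
    (hfpos : ∀ t : ℝ, 0 < t → 0 < f t)
    (hfcont : ContinuousOn f (Set.Ioi (0 : ℝ)))
    (hfmono : MonotoneOn f (Set.Ioi (0 : ℝ))) :
    StrictMonoOn (fun t : ℝ => t ^ α * f t) (Set.Ioi (0 : ℝ)) ∧
    ContinuousOn (fun t : ℝ => t ^ α * f t) (Set.Ioi (0 : ℝ)) ∧
    Set.BijOn (fun t : ℝ => t ^ α * f t) (Set.Ioi (0 : ℝ)) (Set.Ioi (0 : ℝ)) ∧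
    (∀ ginv : ℝ → ℝ,
      (∀ s : ℝ, 0 < s → 0 < ginv s) →
      (∀ t : ℝ, 0 < t → ginv (t ^ α * f t) = t) →
      (∀ s : ℝ, 0 < s → (ginv s) ^ α * f (ginv s) = s) →
      ((∀ x y : ℝ, 0 < x → 0 < y →
          f (Real.sqrt (x * y)) ≤ Real.sqrt (f x * f y)) ↔
        (∀ x y : ℝ, 0 < x → 0 < y →
          Real.sqrt (ginv x * ginv y) ≤ ginv (Real.sqrt (x * y))))) := by
  have hα0 : 0 < α := zero_lt_one.trans_le hα
  have hmono := strictMonoOn_rpow_mul hα0 hfpos hfmono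
  have hcont : ContinuousOn (fun t : ℝ => t ^ α * f t) (Ioi 0) :=
    (continuousOn_id.rpow_const fun t ht => Or.inl (ne_of_gt ht)).mul hfcont
  have hmaps : MapsTo (fun t : ℝ => t ^ α * f t) (Ioi 0) (Ioi 0) := fun t (ht : 0 < t) =>
    mul_pos (rpow_pos_of_pos ht α) (hfpos t ht)
  refine ⟨hmono, hcont, ⟨hmaps, hmono.injOn, surjOn_Ioi_zero_of_tendsto hcont
    (tendsto_rpow_mul_nhdsGT_zero hα0 hfpos hfmono) (tendsto_rpow_mul_atTop hα0 hfpos hfmono)⟩,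
    fun ginv hginv_pos hleft hright => (geomConvex_rpow_mul_iff α f).symm.trans
      (geomConvex_iff_geomConcave_of_invOn hmono hmaps hginv_pos ⟨hleft, hright⟩)⟩
end

section
/- For α ∈ (0,1), the function s ↦ (α − 1 + √((1−α)² + 4sα))/(2α) from (0,∞) to (0,∞) is geometrically concave; it is the inverse function of t ↦ t·(1 − α + α·t). -/
/-! The function `quadInv α` is the increasing inverse of `quadMap α t = t (1 - α + α t)`, and
`quadMap α` is geometrically convex, being `t` times an affine function with nonnegative
coefficients (AM-GM). The inverse of an increasing geometrically convex bijection of `(0,∞)` is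
geometrically concave: with `a = f x`, `b = f y`, applying the increasing `f` to
`g (√(ab)) ≤ √(g a · g b) = √(xy)` gives `√(ab) ≤ f (√(xy))`. -/

open Real Set

theorem geomConcave_of_monotone_inverse_of_geomConvex {f g : ℝ → ℝ} (hf : MonotoneOn f (Ioi 0))
    (hfpos : ∀ s, 0 < s → 0 < f s) (hgpos : ∀ t, 0 < t → 0 < g t)
    (hfg : ∀ t, 0 < t → f (g t) = t) (hgf : ∀ s, 0 < s → g (f s) = s)
    (hg : ∀ a b, 0 < a → 0 < b → g √(a * b) ≤ √(g a * g b))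
    {x y : ℝ} (hx : 0 < x) (hy : 0 < y) : √(f x * f y) ≤ f √(x * y) := by
  have hab : 0 < √(f x * f y) := sqrt_pos.2 (mul_pos (hfpos x hx) (hfpos y hy))
  calc √(f x * f y) = f (g √(f x * f y)) := (hfg _ hab).symm
    _ ≤ f √(g (f x) * g (f y)) :=
      hf (hgpos _ hab) (sqrt_pos.2 (mul_pos (hgpos _ (hfpos x hx)) (hgpos _ (hfpos y hy))))
        (hg _ _ (hfpos x hx) (hfpos y hy))
    _ = f √(x * y) := by rw [hgf x hx, hgf y hy]

theorem sq_add_mul_sqrt_mul_le {c d a b : ℝ} (hc : 0 ≤ c) (hd : 0 ≤ d) (ha : 0 ≤ a) (hb : 0 ≤ b) :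
    (c + d * √(a * b)) ^ 2 ≤ (c + d * a) * (c + d * b) := by
  have hamgm : 2 * √(a * b) ≤ a + b := by
    rw [sqrt_mul ha]
    nlinarith [sq_nonneg (√a - √b), sq_sqrt ha, sq_sqrt hb]
  have hsq : √(a * b) ^ 2 = a * b := sq_sqrt (mul_nonneg ha hb)
  have hdiff : (c + d * a) * (c + d * b) - (c + d * √(a * b)) ^ 2 =
      c * d * (a + b - 2 * √(a * b)) := by
    linear_combination (-d ^ 2) * hsq
  linarith [mul_nonneg (mul_nonneg hc hd) (sub_nonneg.2 hamgm)]

namespace QuadraticInverse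

noncomputable section

def quadMap (α t : ℝ) : ℝ := t * (1 - α + α * t)

def quadInv (α s : ℝ) : ℝ := (α - 1 + √((1 - α) ^ 2 + 4 * s * α)) / (2 * α)

variable {α : ℝ}

theorem quadMap_pos (hα : α ∈ Ioo 0 1) {t : ℝ} (ht : 0 < t) : 0 < quadMap α t := by
  have := hα.1; have := hα.2
  exact mul_pos ht (by nlinarith)

theorem quadMap_sqrt_mul_le (hα : α ∈ Ioo 0 1) {a b : ℝ} (ha : 0 < a) (hb : 0 < b) :
    quadMap α √(a * b) ≤ √(quadMap α a * quadMap α b) := by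
  have hab : 0 ≤ a * b := by positivity
  have hc : 0 ≤ 1 - α := by linarith [hα.2]
  apply le_sqrt_of_sq_le
  calc quadMap α √(a * b) ^ 2 = a * b * (1 - α + α * √(a * b)) ^ 2 := by
        rw [quadMap, mul_pow, sq_sqrt hab]
    _ ≤ a * b * ((1 - α + α * a) * (1 - α + α * b)) :=
        mul_le_mul_of_nonneg_left (sq_add_mul_sqrt_mul_le hc hα.1.le ha.le hb.le) hab
    _ = quadMap α a * quadMap α b := by unfold quadMap; ring

theorem quadInv_monotone (hα : 0 < α) : Monotone (quadInv α) := by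
  intro s s' h
  unfold quadInv
  gcongr

theorem quadInv_pos (hα : 0 < α) {s : ℝ} (hs : 0 < s) : 0 < quadInv α s := by
  have hlt : |1 - α| < √((1 - α) ^ 2 + 4 * s * α) := by
    rw [← sqrt_sq_eq_abs]
    exact sqrt_lt_sqrt (sq_nonneg _) (by nlinarith)
  unfold quadInv
  have := le_abs_self (1 - α)
  apply div_pos _ (by positivity)
  linarith

theorem quadInv_quadMap (hα : α ∈ Ioo 0 1) {t : ℝ} (ht : 0 < t) : quadInv α (quadMap α t) = t := by
  have := hα.1; have := hα.2
  have hsq : (1 - α) ^ 2 + 4 * quadMap α t * α = (1 - α + 2 * α * t) ^ 2 := by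
    unfold quadMap; ring
  rw [quadInv, hsq, sqrt_sq (by nlinarith)]
  field_simp
  ring

theorem quadMap_quadInv (hα : 0 < α) {s : ℝ} (hs : 0 ≤ s) : quadMap α (quadInv α s) = s := by
  have hr := sq_sqrt (show 0 ≤ (1 - α) ^ 2 + 4 * s * α by positivity)
  unfold quadMap quadInv
  generalize √((1 - α) ^ 2 + 4 * s * α) = r at hr ⊢
  field_simp
  linear_combination hr

end

end QuadraticInverse

open QuadraticInverse in
/-- For `α ∈ (0,1)`, the function `s ↦ (α - 1 + √((1-α)² + 4sα))/(2α)` is geometrically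
concave on `(0,∞)`; it is the inverse of `t ↦ t(1 - α + αt)`. -/
theorem quadratic_inverse_geomConcave (α : ℝ) (hα : α ∈ Set.Ioo (0 : ℝ) 1) :
    (∀ x y : ℝ, 0 < x → 0 < y →
      Real.sqrt
          (((α - 1 + Real.sqrt ((1 - α) ^ 2 + 4 * x * α)) / (2 * α)) *
            ((α - 1 + Real.sqrt ((1 - α) ^ 2 + 4 * y * α)) / (2 * α))) ≤
        (α - 1 + Real.sqrt ((1 - α) ^ 2 + 4 * Real.sqrt (x * y) * α)) / (2 * α)) ∧
    (∀ t : ℝ, 0 < t →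
      (α - 1 + Real.sqrt ((1 - α) ^ 2 + 4 * (t * (1 - α + α * t)) * α)) / (2 * α) = t) ∧
    (∀ s : ℝ, 0 < s →
      ((α - 1 + Real.sqrt ((1 - α) ^ 2 + 4 * s * α)) / (2 * α)) *
          (1 - α + α * ((α - 1 + Real.sqrt ((1 - α) ^ 2 + 4 * s * α)) / (2 * α))) = s) := by
  have hfg (t : ℝ) (ht : 0 < t) : quadInv α (quadMap α t) = t := quadInv_quadMap hα ht
  have hgf (s : ℝ) (hs : 0 < s) : quadMap α (quadInv α s) = s := quadMap_quadInv hα.1 hs.le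
  refine ⟨fun x y hx hy => ?_, hfg, hgf⟩
  exact geomConcave_of_monotone_inverse_of_geomConvex ((quadInv_monotone hα.1).monotoneOn _)
    (fun s hs => quadInv_pos hα.1 hs) (fun t ht => quadMap_pos hα ht) hfg hgf
    (fun a b ha hb => quadMap_sqrt_mul_le hα ha hb) hx hy
end

section
/- Let h : ℝ → ℝ be measurable with 0 ≤ h(λ) ≤ 1 for all λ ≤ 0, and define F : ℝ → ℝ by F(x) = ∫_{−∞}^{0} ( 1/(λ − e^x) − 1/(λ − 1) ) h(λ) dλ, the integral being with respect to Lebesgue measure on (−∞,0]. Then F is convex on ℝ if and only if ∫_{−∞}^{0} ( (λ + t)/(λ − t)³ ) h(λ) dλ ≥ 0 for all t > 0. -/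
/-!
With `t = eˣ`, differentiating twice under the integral sign gives
`F'(x) = eˣ ∫ h(λ)/(λ - eˣ)² dλ` and `F''(x) = eˣ ∫ (λ + eˣ)/(λ - eˣ)³ h(λ) dλ`; differentiation is
legitimate because for `t > a > 0` the `t`-derivatives of the kernels are dominated on `(-∞, 0]`
by multiples of `(a - λ)⁻ⁿ` with `n ≥ 2`. A twice differentiable function on `ℝ` is convex iff
its second derivative is nonnegative, and `eˣ` ranges over all of `(0, ∞)`.
-/

open MeasureTheory Set Real

theorem integrableOn_Iic_inv_sub_pow {a c : ℝ} (hac : a < c) {n : ℕ} (hn : 2 ≤ n) :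
    IntegrableOn (fun l : ℝ => ((c - l) ^ n)⁻¹) (Iic a) := by
  have hpow : IntegrableOn (fun x : ℝ => (x ^ n)⁻¹) (Ioi (c - a)) := by
    refine (integrableOn_Ioi_rpow_of_lt (a := -(n : ℝ)) ?_ (sub_pos.2 hac)).congr_fun
      (fun x hx => ?_) measurableSet_Ioi
    · have : (2 : ℝ) ≤ n := by exact_mod_cast hn
      linarith
    · simp [rpow_neg (sub_pos.2 hac |>.trans hx).le]
  have hpow' : IntegrableOn (fun x : ℝ => (x ^ n)⁻¹) (Ici (c - a)) := by
    rwa [integrableOn_Ici_iff_integrableOn_Ioi]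
  have := ((Measure.measurePreserving_sub_left volume c).integrableOn_comp_preimage
    (MeasurableEquiv.subLeft c).measurableEmbedding).2 hpow'
  simpa [Function.comp_def] using this

theorem abs_div_sub_pow_le {a t l : ℝ} (c : ℝ) (n : ℕ) (hla : l < a) (hat : a ≤ t) :
    |c / (l - t) ^ n| ≤ |c| / (a - l) ^ n := by
  rw [abs_div, abs_pow, abs_sub_comm, abs_of_pos (by linarith : 0 < t - l)]
  gcongr

theorem abs_one_div_sub_sub_one_div_sub_le {l s t : ℝ} (hs : l < s) (ht : l < t) :
    |1 / (l - t) - 1 / (l - s)| ≤ |t - s| / (min s t - l) ^ 2 := by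
  have hm : l < min s t := lt_min hs ht
  have hprod : (min s t - l) ^ 2 ≤ (s - l) * (t - l) := by
    rw [sq]
    exact mul_le_mul (by linarith [min_le_left s t]) (by linarith [min_le_right s t])
      (by linarith) (by linarith)
  have hid : 1 / (l - t) - 1 / (l - s) = (t - s) / ((s - l) * (t - l)) := by
    rw [div_sub_div _ _ (by linarith : l - t ≠ 0) (by linarith : l - s ≠ 0)]
    congr 1 <;> ring
  rw [hid, abs_div, abs_of_pos (by nlinarith : 0 < (s - l) * (t - l))]
  gcongr

theorem hasDerivAt_one_div_sub_pow (n : ℕ) {l t : ℝ} (hlt : l ≠ t) :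
    HasDerivAt (fun s => 1 / (l - s) ^ n) (n / (l - t) ^ (n + 1)) t := by
  have hne : l - t ≠ 0 := sub_ne_zero.2 hlt
  have hlin : HasDerivAt (fun s : ℝ => l - s) (-1) t := by
    simpa using (hasDerivAt_id' t).const_sub l
  simp only [one_div]
  refine ((hlin.fun_pow n).fun_inv (pow_ne_zero n hne)).congr_deriv ?_
  rcases n with _ | n
  · simp
  · simp only [add_tsub_cancel_right]
    field_simp
    ring

section BoundedWeight

variable {h : ℝ → ℝ} {C : ℝ}

theorem integrableOn_Iic_zero_mul_of_abs_le (hmeas : Measurable h)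
    (hh : ∀ l ≤ 0, |h l| ≤ C) {g : ℝ → ℝ} (hg : Measurable g) {a M : ℝ} (ha : 0 < a)
    {n : ℕ} (hn : 2 ≤ n) (hgle : ∀ l ≤ 0, |g l| ≤ M / (a - l) ^ n) :
    IntegrableOn (fun l => g l * h l) (Iic 0) := by
  refine Integrable.mono' ((integrableOn_Iic_inv_sub_pow ha hn).const_mul (M * C))
    (hg.mul hmeas).aestronglyMeasurable ?_
  rw [ae_restrict_iff' measurableSet_Iic]
  refine Filter.Eventually.of_forall fun l (hl : l ≤ 0) => ?_
  calc ‖g l * h l‖ = |g l| * |h l| := by rw [norm_mul, Real.norm_eq_abs, Real.norm_eq_abs]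
    _ ≤ M / (a - l) ^ n * C :=
        mul_le_mul (hgle l hl) (hh l hl) (abs_nonneg _) ((abs_nonneg _).trans (hgle l hl))
    _ = M * C * ((a - l) ^ n)⁻¹ := by ring

theorem hasDerivAt_setIntegral_Iic_zero_mul (hmeas : Measurable h)
    (hh : ∀ l ≤ 0, |h l| ≤ C) {K : ℝ → ℝ → ℝ} (hKm : ∀ t, Measurable (K t)) (c : ℝ) {n : ℕ}
    (hn : 2 ≤ n)
    (hK : ∀ t > 0, ∀ l ≤ 0, HasDerivAt (fun s => K s l) (c / (l - t) ^ n) t)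
    {t₀ : ℝ} (ht₀ : 0 < t₀) (hint : IntegrableOn (fun l => K t₀ l * h l) (Iic 0)) :
    HasDerivAt (fun t => ∫ l in Iic 0, K t l * h l) (∫ l in Iic 0, c / (l - t₀) ^ n * h l) t₀ := by
  have ha : 0 < t₀ / 2 := half_pos ht₀
  refine (hasDerivAt_integral_of_dominated_loc_of_deriv_le
    (F' := fun t l => c / (l - t) ^ n * h l) (Ioi_mem_nhds (half_lt_self ht₀))
    (.of_forall fun t => ((hKm t).mul hmeas).aestronglyMeasurable) hint
    (by fun_prop : Measurable fun l => c / (l - t₀) ^ n * h l).aestronglyMeasurable ?_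
    ((integrableOn_Iic_inv_sub_pow ha hn).const_mul (|c| * C)) ?_).2
  · rw [ae_restrict_iff' measurableSet_Iic]
    refine .of_forall fun l (hl : l ≤ 0) t (ht : t₀ / 2 < t) => ?_
    calc ‖c / (l - t) ^ n * h l‖ = |c / (l - t) ^ n| * |h l| := by
          rw [norm_mul, Real.norm_eq_abs, Real.norm_eq_abs]
      _ ≤ |c| / (t₀ / 2 - l) ^ n * C :=
          mul_le_mul (abs_div_sub_pow_le c n (by linarith) ht.le) (hh l hl) (abs_nonneg _)
            ((abs_nonneg _).trans (abs_div_sub_pow_le c n (by linarith) ht.le))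
      _ = |c| * C * ((t₀ / 2 - l) ^ n)⁻¹ := by ring
  · rw [ae_restrict_iff' measurableSet_Iic]
    exact .of_forall fun l (hl : l ≤ 0) t (ht : t₀ / 2 < t) =>
      (hK t (ha.trans ht) l hl).mul_const (h l)

theorem integrableOn_div_sub_pow_mul (hmeas : Measurable h) (hh : ∀ l ≤ 0, |h l| ≤ C)
    (c : ℝ) {n : ℕ} (hn : 2 ≤ n) {t : ℝ} (ht : 0 < t) :
    IntegrableOn (fun l => c / (l - t) ^ n * h l) (Iic 0) :=
  integrableOn_Iic_zero_mul_of_abs_le hmeas hh (by fun_prop) ht hn fun l hl =>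
    abs_div_sub_pow_le c n (by linarith) le_rfl

theorem integrableOn_one_div_sub_sub_one_div_sub_mul (hmeas : Measurable h)
    (hh : ∀ l ≤ 0, |h l| ≤ C) {s t : ℝ} (hs : 0 < s) (ht : 0 < t) :
    IntegrableOn (fun l => (1 / (l - t) - 1 / (l - s)) * h l) (Iic 0) :=
  integrableOn_Iic_zero_mul_of_abs_le hmeas hh (by fun_prop) (lt_min hs ht) le_rfl fun l hl =>
    abs_one_div_sub_sub_one_div_sub_le (by linarith) (by linarith)

theorem integral_add_div_sub_pow_three_mul (hmeas : Measurable h)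
    (hh : ∀ l ≤ 0, |h l| ≤ C) {t : ℝ} (ht : 0 < t) :
    ∫ l in Iic 0, (l + t) / (l - t) ^ 3 * h l =
      t * (∫ l in Iic 0, 2 / (l - t) ^ 3 * h l) + ∫ l in Iic 0, 1 / (l - t) ^ 2 * h l := by
  rw [← integral_const_mul, ← integral_add ((integrableOn_div_sub_pow_mul hmeas hh 2
    (by norm_num) ht).const_mul t) (integrableOn_div_sub_pow_mul hmeas hh 1 le_rfl ht)]
  refine setIntegral_congr_fun measurableSet_Iic fun l (hl : l ≤ 0) => ?_
  have : l - t ≠ 0 := by linarith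
  field_simp
  ring

end BoundedWeight

theorem convexOn_univ_iff_of_hasDerivAt2 {f f' f'' : ℝ → ℝ} (hf : ∀ x, HasDerivAt f (f' x) x)
    (hf' : ∀ x, HasDerivAt f' (f'' x) x) : ConvexOn ℝ univ f ↔ ∀ x, 0 ≤ f'' x := by
  refine ⟨fun hconv x => ?_, fun hf''_nonneg => ?_⟩
  · have hmono := hconv.monotoneOn_deriv fun x _ => (hf x).differentiableAt
    rw [show deriv f = f' from funext fun x => (hf x).deriv] at hmono
    exact (hf' x).nonneg_of_monotone (monotoneOn_univ.1 hmono)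
  · exact convexOn_of_hasDerivWithinAt2_nonneg convex_univ
      (continuous_iff_continuousAt.2 fun x => (hf x).continuousAt).continuousOn
      (fun x _ => (hf x).hasDerivWithinAt) (fun x _ => (hf' x).hasDerivWithinAt)
      fun x _ => hf''_nonneg x

/-- Characterization of convexity of `F(x) = ∫_{-∞}^0 (1/(λ-eˣ) - 1/(λ-1)) h(λ) dλ`
(equivalently, geometric convexity of the represented operator mean) via the sign of
`∫_{-∞}^0 (λ+t)/(λ-t)³ h(λ) dλ`. -/
theorem convex_iff_integral_nonneg (h : ℝ → ℝ) (hmeas : Measurable h)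
    (hbd : ∀ l : ℝ, l ≤ 0 → 0 ≤ h l ∧ h l ≤ 1)
    (F : ℝ → ℝ)
    (hF : ∀ x : ℝ,
      F x = ∫ l in Set.Iic (0 : ℝ), (1 / (l - Real.exp x) - 1 / (l - 1)) * h l) :
    ConvexOn ℝ Set.univ F ↔
    (∀ t : ℝ, 0 < t →
      0 ≤ ∫ l in Set.Iic (0 : ℝ), ((l + t) / (l - t) ^ 3) * h l) := by
  have hh : ∀ l ≤ 0, |h l| ≤ 1 := fun l hl => abs_le.2 ⟨by linarith [hbd l hl], (hbd l hl).2⟩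
  have hΦ : ∀ t > 0, HasDerivAt (fun t => ∫ l in Iic 0, (1 / (l - t) - 1 / (l - 1)) * h l)
      (∫ l in Iic 0, 1 / (l - t) ^ 2 * h l) t := fun t ht =>
    hasDerivAt_setIntegral_Iic_zero_mul hmeas hh (by fun_prop) 1 le_rfl
      (fun s _ l hl => by simpa using
        (hasDerivAt_one_div_sub_pow 1 (by linarith : l ≠ s)).sub_const (1 / (l - 1)))
      ht (integrableOn_one_div_sub_sub_one_div_sub_mul hmeas hh one_pos ht)
  have hΦ₂ : ∀ t > 0, HasDerivAt (fun t => ∫ l in Iic 0, 1 / (l - t) ^ 2 * h l)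
      (∫ l in Iic 0, 2 / (l - t) ^ 3 * h l) t := fun t ht =>
    hasDerivAt_setIntegral_Iic_zero_mul hmeas hh (by fun_prop) 2 (by norm_num)
      (fun s _ l hl => by simpa using hasDerivAt_one_div_sub_pow 2 (by linarith : l ≠ s))
      ht (integrableOn_div_sub_pow_mul hmeas hh 1 le_rfl ht)
  have hF' : ∀ x, HasDerivAt F ((∫ l in Iic 0, 1 / (l - exp x) ^ 2 * h l) * exp x) x := by
    intro x
    rw [show F = _ from funext hF]
    exact (hΦ _ (exp_pos x)).comp x (hasDerivAt_exp x)
  have hF'' : ∀ x, HasDerivAt (fun x => (∫ l in Iic 0, 1 / (l - exp x) ^ 2 * h l) * exp x)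
      (exp x * ∫ l in Iic 0, (l + exp x) / (l - exp x) ^ 3 * h l) x := by
    intro x
    rw [integral_add_div_sub_pow_three_mul hmeas hh (exp_pos x)]
    refine (((hΦ₂ _ (exp_pos x)).comp x (hasDerivAt_exp x)).fun_mul
      (hasDerivAt_exp x)).congr_deriv ?_
    simp only [Function.comp_apply]
    ring
  rw [convexOn_univ_iff_of_hasDerivAt2 hF' hF'']
  refine ⟨fun H t ht => ?_, fun H x => mul_nonneg (exp_pos x).le (H _ (exp_pos x))⟩
  simpa [exp_log ht, mul_nonneg_iff_of_pos_left ht] using H (log t)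
end

section
/- Define f : (0,∞) → (0,∞) by f(t) = ((t + 2)/3)^{9/14} · (2t/(t + 1))^{5/14}. Then (i) f(t)^r ≤ f(t^r) for all t > 0 and all r ≥ 1, but (ii) f is not geometrically convex: there exist x, y > 0 with f(√(x·y)) > √(f(x)·f(y)). Hence the class of geometrically convex normalized functions is a proper subset of the class of power monotone increasing normalized functions. -/
/-!
Write `f(t) = exp (φ (log t))`. Power monotonicity says `r φ(v) ≤ φ(r v)` for `r ≥ 1`, which holds
as soon as `φ(v) ≤ v φ'(v)` everywhere, i.e. `φ(s v) / s` is nondecreasing in `s`. The defect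
`D(v) = v φ'(v) - φ(v)` vanishes at `0` and has derivative `v φ''(v)`; since `φ'' ≥ 0` once
`e^v ≥ 1/5`, `D` is minimal at `0` on `[log (1/5), ∞)`, and for `e^v ≤ 1/5` elementary log
bounds reduce `D ≥ 0` to `9 log 3 - 14 log 2 > 1/15`.

Geometric convexity would make `φ` midpoint convex, but `φ''` is negative near `-∞`; concretely
it fails at `x = 10⁻², y = 10⁻⁴`, checked after raising both sides to the 14th power.
-/

open Real Set

theorem Real.rpow_div_natCast_pow {x : ℝ} (hx : 0 ≤ x) (m : ℕ) {n : ℕ} (hn : n ≠ 0) :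
    (x ^ ((m : ℝ) / n)) ^ n = x ^ m := by
  rw [← rpow_natCast (x ^ _), ← rpow_mul hx, div_mul_cancel₀ _ (Nat.cast_ne_zero.mpr hn),
    rpow_natCast]

theorem isMinOn_zero_of_hasDerivAt_mul_self {D H : ℝ → ℝ} {a : ℝ} (ha : a ≤ 0)
    (hD : ∀ x, HasDerivAt D (x * H x) x) (hH : ∀ x, a ≤ x → 0 ≤ H x) :
    IsMinOn D (Ici a) 0 := by
  intro v (hv : a ≤ v)
  have hDcont : Continuous D := continuous_iff_continuousAt.mpr fun x => (hD x).continuousAt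
  rcases le_total v 0 with hv0 | hv0
  · refine antitoneOn_of_hasDerivWithinAt_nonpos (convex_Icc v 0) hDcont.continuousOn
      (fun x _ => (hD x).hasDerivWithinAt) (fun x hx => ?_) ⟨le_rfl, hv0⟩ ⟨hv0, le_rfl⟩ hv0
    rw [interior_Icc] at hx
    exact mul_nonpos_of_nonpos_of_nonneg hx.2.le (hH x (hv.trans hx.1.le))
  · refine monotoneOn_of_hasDerivWithinAt_nonneg (convex_Icc 0 v) hDcont.continuousOn
      (fun x _ => (hD x).hasDerivWithinAt) (fun x hx => ?_) ⟨le_rfl, hv0⟩ ⟨hv0, le_rfl⟩ hv0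
    rw [interior_Icc] at hx
    exact mul_nonneg hx.1.le (hH x (ha.trans hx.1.le))

theorem mul_le_apply_mul_of_le_mul_deriv {F F' : ℝ → ℝ} (hF : ∀ x, HasDerivAt F (F' x) x)
    (hFF' : ∀ x, F x ≤ x * F' x) {r : ℝ} (hr : 1 ≤ r) (u : ℝ) : r * F u ≤ F (r * u) := by
  have hquot : ∀ s ∈ Ici (1 : ℝ), HasDerivAt (fun s => F (s * u) / s)
      ((F' (s * u) * u * s - F (s * u) * 1) / s ^ 2) s := fun s hs =>
    ((hF (s * u)).comp s (hasDerivAt_mul_const u)).div (hasDerivAt_id s)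
      (by linarith [mem_Ici.mp hs])
  have hmono : MonotoneOn (fun s => F (s * u) / s) (Ici 1) := by
    refine monotoneOn_of_hasDerivWithinAt_nonneg (convex_Ici 1)
      (fun s hs => (hquot s hs).continuousAt.continuousWithinAt)
      (fun s hs => (hquot s (interior_subset hs)).hasDerivWithinAt) fun s _ => ?_
    have := hFF' (s * u)
    exact div_nonneg (by nlinarith) (sq_nonneg s)
  have : F (1 * u) / 1 ≤ F (r * u) / r := hmono self_mem_Ici hr hr
  rw [one_mul, div_one, le_div_iff₀ (by linarith)] at this
  linarith

theorem nine_mul_log_three_sub_fourteen_mul_log_two : 1 / 15 ≤ 9 * log 3 - 14 * log 2 := by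
  have h := one_sub_inv_le_log_of_pos (show (0 : ℝ) < 3 ^ 9 / 2 ^ 14 by norm_num)
  rw [log_div (by norm_num) (by norm_num), log_pow, log_pow] at h
  norm_num at h ⊢
  linarith

namespace HansenExample

noncomputable def f (t : ℝ) : ℝ :=
  ((t + 2) / 3) ^ ((9 : ℝ) / 14) * (2 * t / (t + 1)) ^ ((5 : ℝ) / 14)

noncomputable def φ (v : ℝ) : ℝ :=
  9 / 14 * log ((exp v + 2) / 3) + 5 / 14 * log (2 * exp v / (exp v + 1))

noncomputable def φ' (v : ℝ) : ℝ :=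
  9 / 14 * (exp v / (exp v + 2)) + 5 / 14 * (1 / (exp v + 1))

noncomputable def φ'' (v : ℝ) : ℝ :=
  exp v * (9 / 7 / (exp v + 2) ^ 2 - 5 / 14 / (exp v + 1) ^ 2)

theorem f_eq_exp_φ_log {t : ℝ} (ht : 0 < t) : f t = exp (φ (log t)) := by
  rw [f, φ, exp_log ht, rpow_def_of_pos (by positivity), rpow_def_of_pos (by positivity),
    ← exp_add]
  ring_nf

theorem hasDerivAt_φ (v : ℝ) : HasDerivAt φ (φ' v) v := by
  have hx := exp_pos v
  have h₁ : HasDerivAt (fun v => (exp v + 2) / 3) (exp v / 3) v :=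
    ((hasDerivAt_exp v).add_const 2).div_const 3
  have h₂ : HasDerivAt (fun v => 2 * exp v / (exp v + 1))
      ((2 * exp v * (exp v + 1) - 2 * exp v * exp v) / (exp v + 1) ^ 2) v :=
    ((hasDerivAt_exp v).const_mul 2).div ((hasDerivAt_exp v).add_const 1) (by positivity)
  refine (((h₁.log (by positivity)).const_mul (9 / 14 : ℝ)).add
    ((h₂.log (by positivity)).const_mul (5 / 14 : ℝ))).congr_deriv ?_
  rw [φ']
  field_simp
  ring

theorem hasDerivAt_φ' (v : ℝ) : HasDerivAt φ' (φ'' v) v := by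
  have hx := exp_pos v
  have h₁ := (((hasDerivAt_exp v).div ((hasDerivAt_exp v).add_const 2)
    (by positivity))).const_mul (9 / 14 : ℝ)
  have h₂ := (((hasDerivAt_const v 1).div ((hasDerivAt_exp v).add_const 1)
    (by positivity))).const_mul (5 / 14 : ℝ)
  refine (h₁.add h₂).congr_deriv ?_
  rw [φ'']
  field_simp
  ring

theorem φ''_nonneg {v : ℝ} (hv : 1 / 5 ≤ exp v) : 0 ≤ φ'' v := by
  have hx := exp_pos v
  refine mul_nonneg hx.le (sub_nonneg.mpr ?_)
  rw [div_le_div_iff₀ (by positivity) (by positivity)]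
  nlinarith

theorem φ_le_mul_φ'_of_exp_le {v : ℝ} (hv : exp v ≤ 1 / 5) : φ v ≤ v * φ' v := by
  set x := exp v with hx_def
  have hx : 0 < x := exp_pos v
  have hv0 : v ≤ 0 := by
    rw [← exp_le_one_iff]
    linarith
  have hdefect : 14 * (v * φ' v - φ v) = v * x * (4 * x - 1) / ((x + 2) * (x + 1))
      + (9 * log 3 - 14 * log 2) - 9 * (log (x + 2) - log 2) + 5 * log (x + 1) := by
    rw [φ, φ', log_div (by positivity) (by norm_num), log_div (by positivity) (by positivity),
      log_mul (by norm_num) (by positivity), hx_def, log_exp]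
    field_simp
    ring
  have hfirst : 0 ≤ v * x * (4 * x - 1) / ((x + 2) * (x + 1)) :=
    div_nonneg (by nlinarith [mul_nonpos_of_nonpos_of_nonneg hv0 hx.le]) (by positivity)
  have hlog₂ : log (x + 2) - log 2 ≤ x / 2 := by
    rw [← log_div (by positivity) (by norm_num)]
    linarith [log_le_sub_one_of_pos (show 0 < (x + 2) / 2 by positivity)]
  have hlog₁ : x / (x + 1) ≤ log (x + 1) := by
    have := one_sub_inv_le_log_of_pos (show 0 < x + 1 by positivity)
    rwa [show 1 - (x + 1)⁻¹ = x / (x + 1) by field_simp; ring] at this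
  have hquot : 5 * x / 6 ≤ x / (x + 1) := by
    rw [div_le_div_iff₀ (by norm_num) (by positivity)]
    nlinarith
  linarith [nine_mul_log_three_sub_fourteen_mul_log_two]

theorem φ_le_mul_φ' (v : ℝ) : φ v ≤ v * φ' v := by
  rcases le_total (exp v) (1 / 5) with hv | hv
  · exact φ_le_mul_φ'_of_exp_le hv
  have hD : ∀ w, HasDerivAt (fun w => w * φ' w - φ w) (w * φ'' w) w := fun w =>
    (((hasDerivAt_id w).mul (hasDerivAt_φ' w)).sub (hasDerivAt_φ w)).congr_deriv (by simp)
  have hmin := isMinOn_zero_of_hasDerivAt_mul_self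
    (log_nonpos (by norm_num) (by norm_num) : log (1 / 5 : ℝ) ≤ 0) hD
    fun w hw => φ''_nonneg ((log_le_iff_le_exp (by norm_num)).mp hw)
  have hφ0 : φ 0 = 0 := by norm_num [φ]
  have : 0 * φ' 0 - φ 0 ≤ v * φ' v - φ v := hmin ((log_le_iff_le_exp (by norm_num)).mpr hv)
  linarith

theorem f_rpow_le {t : ℝ} (ht : 0 < t) {r : ℝ} (hr : 1 ≤ r) : f t ^ r ≤ f (t ^ r) := by
  rw [f_eq_exp_φ_log ht, f_eq_exp_φ_log (rpow_pos_of_pos ht r), log_rpow ht, ← exp_mul,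
    exp_le_exp, mul_comm]
  exact mul_le_apply_mul_of_le_mul_deriv hasDerivAt_φ φ_le_mul_φ' hr _

theorem f_pow_fourteen {t : ℝ} (ht : 0 ≤ t) :
    f t ^ 14 = ((t + 2) / 3) ^ 9 * (2 * t / (t + 1)) ^ 5 := by
  rw [f, mul_pow]
  exact congrArg₂ _ (rpow_div_natCast_pow (by positivity) 9 (by norm_num))
    (rpow_div_natCast_pow (by positivity) 5 (by norm_num))

theorem sqrt_mul_f_lt_f_sqrt :
    sqrt (f (1 / 100) * f (1 / 10000)) < f (sqrt (1 / 100 * (1 / 10000))) := by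
  have hsqrt : sqrt (1 / 100 * (1 / 10000) : ℝ) = 1 / 1000 := by
    rw [show (1 / 100 * (1 / 10000) : ℝ) = (1 / 1000) ^ 2 by norm_num, sqrt_sq (by norm_num)]
  have hpos : ∀ t : ℝ, 0 < t → 0 < f t := fun t ht => by unfold f; positivity
  rw [hsqrt, sqrt_lt' (hpos _ (by norm_num))]
  refine lt_of_pow_lt_pow_left₀ 14 (sq_nonneg _) ?_
  rw [mul_pow, ← pow_mul, mul_comm 2 14, pow_mul, f_pow_fourteen (by norm_num),
    f_pow_fourteen (by norm_num), f_pow_fourteen (by norm_num)]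
  norm_num

end HansenExample

/-- The function `f(t) = ((t+2)/3)^{9/14} · (2t/(t+1))^{5/14}` is power monotone
increasing but not geometrically convex; hence `GCV ⊊ PMI`. -/
theorem pmi_not_geomConvex :
    (∀ t : ℝ, 0 < t → ∀ r : ℝ, 1 ≤ r →
      (((t + 2) / 3) ^ ((9 : ℝ) / 14) * (2 * t / (t + 1)) ^ ((5 : ℝ) / 14)) ^ r ≤
        ((t ^ r + 2) / 3) ^ ((9 : ℝ) / 14) *
          (2 * t ^ r / (t ^ r + 1)) ^ ((5 : ℝ) / 14)) ∧
    (∃ x y : ℝ, 0 < x ∧ 0 < y ∧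
      Real.sqrt
          ((((x + 2) / 3) ^ ((9 : ℝ) / 14) * (2 * x / (x + 1)) ^ ((5 : ℝ) / 14)) *
            (((y + 2) / 3) ^ ((9 : ℝ) / 14) * (2 * y / (y + 1)) ^ ((5 : ℝ) / 14))) <
        ((Real.sqrt (x * y) + 2) / 3) ^ ((9 : ℝ) / 14) *
          (2 * Real.sqrt (x * y) / (Real.sqrt (x * y) + 1)) ^ ((5 : ℝ) / 14)) :=
  ⟨fun _ ht _ hr => HansenExample.f_rpow_le ht hr,
    1 / 100, 1 / 10000, by norm_num, by norm_num, HansenExample.sqrt_mul_f_lt_f_sqrt⟩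
end

section
/- Let f : (0,∞) → (0,∞) satisfy f(1) = 1 and be differentiable at 1 with derivative f'(1) = α, and let r > 1. If f(t)^r ≤ f(t^r) for all t > 0, then f(t) ≥ t^α for all t > 0. -/
/-!
In logarithmic coordinates `g x = log (f (exp x))` the hypothesis reads `r * g x ≤ g (r * x)`, so
by iteration `r ^ n * g (x / r ^ n) ≤ g x`. As `n → ∞` the left side is `x` times a difference
quotient of `g` at `0`, which tends to `g'(0) * x = α * x`; hence `α * log t ≤ log (f t)`.
-/

open Filter Topology Real

section Superhomogeneous

variable {g : ℝ → ℝ} {r : ℝ}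

theorem pow_mul_apply_le_apply_pow_mul (hr : 0 ≤ r) (h : ∀ x, r * g x ≤ g (r * x)) (n : ℕ)
    (x : ℝ) : r ^ n * g x ≤ g (r ^ n * x) := by
  induction n generalizing x with
  | zero => simp
  | succ n ih =>
    calc r ^ (n + 1) * g x = r * (r ^ n * g x) := by ring
      _ ≤ r * g (r ^ n * x) := mul_le_mul_of_nonneg_left (ih x) hr
      _ ≤ g (r * (r ^ n * x)) := h _
      _ = g (r ^ (n + 1) * x) := by ring_nf

theorem tendsto_pow_mul_apply_div_pow {α : ℝ} (hg0 : g 0 = 0) (hg : HasDerivAt g α 0)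
    (hr : 1 < r) (x : ℝ) :
    Tendsto (fun n : ℕ ↦ r ^ n * g (x / r ^ n)) atTop (𝓝 (α * x)) := by
  rcases eq_or_ne x 0 with rfl | hx
  · simp [hg0]
  have hrn : ∀ n : ℕ, r ^ n ≠ 0 := fun n ↦ pow_ne_zero n (by linarith)
  have hto0 : Tendsto (fun n : ℕ ↦ x / r ^ n) atTop (𝓝[≠] 0) := by
    refine tendsto_nhdsWithin_of_tendsto_nhds_of_eventually_within _ ?_
      (Eventually.of_forall fun n ↦ div_ne_zero hx (hrn n))
    simpa using (tendsto_pow_atTop_atTop_of_one_lt hr).const_div_atTop x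
  have hslope := (hasDerivAt_iff_tendsto_slope.mp hg).comp hto0
  refine (hslope.mul_const x).congr fun n ↦ ?_
  simp only [Function.comp_apply, slope_def_field, hg0, sub_zero]
  field_simp

theorem mul_le_of_mul_le_apply_mul {α : ℝ} (hg0 : g 0 = 0) (hg : HasDerivAt g α 0)
    (hr : 1 < r) (h : ∀ x, r * g x ≤ g (r * x)) (x : ℝ) : α * x ≤ g x := by
  refine le_of_tendsto (tendsto_pow_mul_apply_div_pow hg0 hg hr x)
    (Eventually.of_forall fun n ↦ ?_)
  have hrn : r ^ n ≠ 0 := pow_ne_zero n (by linarith)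
  simpa [mul_div_cancel₀ x hrn] using
    pow_mul_apply_le_apply_pow_mul (by linarith) h n (x / r ^ n)

end Superhomogeneous

theorem hasDerivAt_log_comp_exp {f : ℝ → ℝ} {α : ℝ} (hone : f 1 = 1)
    (hf : HasDerivAt f α 1) : HasDerivAt (fun x ↦ log (f (exp x))) α 0 := by
  have hexp : HasDerivAt exp 1 0 := by simpa using hasDerivAt_exp 0
  have hf' : HasDerivAt f α (exp 0) := by simpa using hf
  simpa [hone] using ((hf'.comp 0 hexp).log (by simp [hone]))

theorem mul_log_comp_exp_le {f : ℝ → ℝ} {r : ℝ} (hpos : ∀ t, 0 < t → 0 < f t)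
    (hpmi : ∀ t, 0 < t → f t ^ r ≤ f (t ^ r)) (x : ℝ) :
    r * log (f (exp x)) ≤ log (f (exp (r * x))) := by
  have hfx := hpos _ (exp_pos x)
  rw [← log_rpow hfx, mul_comm r x, exp_mul]
  exact log_le_log (rpow_pos_of_pos hfx r) (hpmi _ (exp_pos x))

/-- `PMI_r ⊆ PMI_∞`: if `f(1) = 1`, `f` is differentiable at `1` with derivative `α`,
and `f(t)^r ≤ f(t^r)` for all `t > 0` for some fixed `r > 1`, then `f(t) ≥ t^α` for
all `t > 0`. -/
theorem pmi_r_subset_pmi_infty (f : ℝ → ℝ) (α r : ℝ)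
    (hpos : ∀ t : ℝ, 0 < t → 0 < f t)
    (hone : f 1 = 1)
    (hderiv : HasDerivAt f α 1)
    (hr : 1 < r)
    (hpmi : ∀ t : ℝ, 0 < t → f t ^ r ≤ f (t ^ r)) :
    ∀ t : ℝ, 0 < t → t ^ α ≤ f t := by
  intro t ht
  have hlog : α * log t ≤ log (f (exp (log t))) :=
    mul_le_of_mul_le_apply_mul (by simp [hone]) (hasDerivAt_log_comp_exp hone hderiv) hr
      (mul_log_comp_exp_le hpos hpmi) (log t)
  rw [exp_log ht] at hlog
  calc t ^ α = exp (α * log t) := by rw [rpow_def_of_pos ht, mul_comm]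
    _ ≤ exp (log (f t)) := exp_le_exp.mpr hlog
    _ = f t := exp_log (hpos t ht)
end

section
/- Define f : (0,∞) → (0,∞) by f(t) = ((1/3)·t + (2/3)·t^{1/3})/((1/3) + (2/3)·t^{1/3}). Then (i) f(t) ≥ t^{1/3} for all t > 0, and (ii) for every r > 1 the ratio f(t^r)/f(t)^r tends to 2^{1−r} < 1 as t → 0⁺; in particular, for every r > 1 there exists t > 0 with f(t^r) < f(t)^r. -/
/-!
Substituting `s = t^{1/3}` gives `f(t) = s · φ(s)` with `φ(s) = (s² + 2)/(1 + 2s)`.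
Since `φ(s) - 1 = (s - 1)²/(1 + 2s) ≥ 0`, we get `f(t) ≥ t^{1/3}`. Near `0` the factor
`s` contributes the same power `t^{r/3}` to `f(t^r)` and to `f(t)^r`, so the ratio
behaves like `φ(0)/φ(0)^r = 2^{1-r}`.
-/

open Filter Real Topology

lemma one_le_sq_add_two_div {s : ℝ} (hs : 0 ≤ s) : 1 ≤ (s ^ 2 + 2) / (1 + 2 * s) := by
  rw [one_le_div (by positivity)]
  nlinarith [sq_nonneg (s - 1)]

lemma cube_div_eq_mul_sq_add_two_div {s : ℝ} (hs : 0 ≤ s) :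
    (1 / 3 * s ^ 3 + 2 / 3 * s) / (1 / 3 + 2 / 3 * s) = s * ((s ^ 2 + 2) / (1 + 2 * s)) := by
  field_simp

lemma rpow_one_div_three_pow_three {t : ℝ} (ht : 0 ≤ t) : (t ^ ((1 : ℝ) / 3)) ^ 3 = t := by
  simpa using rpow_inv_natCast_pow ht (n := 3) (by norm_num)

lemma tendsto_rpow_nhdsGT_zero {r : ℝ} (hr : 0 < r) :
    Tendsto (fun t : ℝ => t ^ r) (𝓝[>] 0) (𝓝[>] 0) := by
  refine tendsto_nhdsWithin_of_tendsto_nhds_of_eventually_within _ ?_ ?_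
  · simpa [zero_rpow hr.ne'] using
      (continuousAt_rpow_const 0 r (Or.inr hr.le)).tendsto.mono_left nhdsWithin_le_nhds
  · filter_upwards [self_mem_nhdsWithin] with t ht using rpow_pos_of_pos ht r

lemma tendsto_comp_rpow_div_rpow_of_eq_rpow_mul {f g : ℝ → ℝ} {a c r : ℝ}
    (hfg : ∀ t, 0 < t → f t = t ^ a * g t) (hg : Tendsto g (𝓝[>] 0) (𝓝 c)) (hc : 0 < c)
    (hr : 0 < r) :
    Tendsto (fun t => f (t ^ r) / f t ^ r) (𝓝[>] 0) (𝓝 (c ^ (1 - r))) := by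
  have hlim : Tendsto (fun t => g (t ^ r) / g t ^ r) (𝓝[>] 0) (𝓝 (c / c ^ r)) :=
    (hg.comp (tendsto_rpow_nhdsGT_zero hr)).div
      ((continuousAt_rpow_const c r (Or.inl hc.ne')).tendsto.comp hg) (rpow_pos_of_pos hc r).ne'
  rw [rpow_sub hc, rpow_one]
  refine hlim.congr' ?_
  filter_upwards [self_mem_nhdsWithin, hg.eventually (Ioi_mem_nhds hc)] with t ht hgt
  have hta : 0 < (t ^ a) ^ r := rpow_pos_of_pos (rpow_pos_of_pos ht a) r
  rw [hfg t ht, hfg _ (rpow_pos_of_pos ht r), mul_rpow (rpow_pos_of_pos ht a).le (le_of_lt hgt),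
    ← rpow_mul ht.le, mul_comm r a, rpow_mul ht.le, mul_div_mul_left _ _ hta.ne']

lemma exists_lt_of_tendsto_div_lt_one {F G : ℝ → ℝ} {ℓ : ℝ}
    (hFG : Tendsto (fun t => F t / G t) (𝓝[>] 0) (𝓝 ℓ)) (hℓ : ℓ < 1) (hG : ∀ t, 0 < t → 0 < G t) :
    ∃ t, 0 < t ∧ F t < G t := by
  obtain ⟨t, hlt, ht⟩ := ((hFG.eventually (Iio_mem_nhds hℓ)).and self_mem_nhdsWithin).exists
  exact ⟨t, ht, (div_lt_one (hG t ht)).mp hlt⟩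

/-- The function `f(t) = ((1/3)t + (2/3)t^{1/3})/((1/3) + (2/3)t^{1/3})` satisfies
`f(t) ≥ t^{1/3}` for all `t > 0` (so `f ∈ PMI_∞`), while for every `r > 1` the ratio
`f(t^r)/f(t)^r` tends to `2^{1-r} < 1` as `t → 0⁺`; in particular `f ∉ PMI_r` for
every `r > 1`. -/
theorem pmi_infty_not_pmi_r (f : ℝ → ℝ)
    (hf : ∀ t : ℝ, 0 < t →
      f t = ((1 / 3) * t + (2 / 3) * t ^ ((1 : ℝ) / 3)) /
        ((1 / 3) + (2 / 3) * t ^ ((1 : ℝ) / 3))) :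
    (∀ t : ℝ, 0 < t → t ^ ((1 : ℝ) / 3) ≤ f t) ∧
    (∀ r : ℝ, 1 < r →
      Filter.Tendsto (fun t : ℝ => f (t ^ r) / f t ^ r)
        (nhdsWithin 0 (Set.Ioi (0 : ℝ))) (nhds ((2 : ℝ) ^ (1 - r))) ∧
      (2 : ℝ) ^ (1 - r) < 1 ∧
      ∃ t : ℝ, 0 < t ∧ f (t ^ r) < f t ^ r) := by
  set φ : ℝ → ℝ := fun s => (s ^ 2 + 2) / (1 + 2 * s)
  have hf_eq : ∀ t, 0 < t → f t = t ^ ((1 : ℝ) / 3) * φ (t ^ ((1 : ℝ) / 3)) := fun t ht => by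
    rw [hf t ht, ← cube_div_eq_mul_sq_add_two_div (rpow_nonneg ht.le _),
      rpow_one_div_three_pow_three ht.le]
  have hle : ∀ t, 0 < t → t ^ ((1 : ℝ) / 3) ≤ f t := fun t ht => by
    rw [hf_eq t ht]
    exact le_mul_of_one_le_right (rpow_nonneg ht.le _) (one_le_sq_add_two_div (rpow_nonneg ht.le _))
  have hφ : Tendsto (fun t => φ (t ^ ((1 : ℝ) / 3))) (𝓝[>] 0) (𝓝 2) := by
    have hcont : ContinuousAt φ 0 := by fun_prop (disch := norm_num)
    have hφ0 : φ 0 = 2 := by norm_num [φ]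
    rw [← hφ0]
    exact hcont.tendsto.comp
      ((tendsto_rpow_nhdsGT_zero (by norm_num : (0 : ℝ) < 1 / 3)).mono_right nhdsWithin_le_nhds)
  refine ⟨hle, fun r hr => ?_⟩
  have hlim := tendsto_comp_rpow_div_rpow_of_eq_rpow_mul hf_eq hφ two_pos (by linarith : 0 < r)
  have hlt : (2 : ℝ) ^ (1 - r) < 1 := rpow_lt_one_of_one_lt_of_neg one_lt_two (by linarith)
  refine ⟨hlim, hlt, exists_lt_of_tendsto_div_lt_one hlim hlt fun t ht => ?_⟩
  exact rpow_pos_of_pos ((rpow_pos_of_pos ht _).trans_le (hle t ht)) r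
end
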